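/- arXiv:2105.01000 — 3 statements merged into one kernel-verified Lean document; each statement's English description precedes it below -/
import Mathlib

section
/- Let A and B be connected cochain DG algebras over a field k and let E be a DG (A ⊗ B)-module such that Hom_{A⊗B}(M, E) is acyclic for every acyclic DG (A ⊗ B)-module M. Then for any left DG B-module Q, the Hom-complex Hom_B(Q, E), regarded as a left DG A-module via (a·f)(y) = (a⊗1) f(y), satisfies: Hom_A(N, Hom_B(Q, E)) is acyclic for every acyclic left DG A-module N. -/
/-!
Common infrastructure: connected cochain DG algebras over a field `k`,
(left/right/bi-) DG modules, Hom-complexes, torsion functors, etc.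
-/

universe u v w

open DirectSum TensorProduct

/-- A connected cochain DG algebra over a field `k`:
a ℤ-graded unital associative `k`-algebra `A = ⊕ᵢ Aⁱ` with `Aⁱ = 0` for `i < 0`,
`A⁰ = k·1`, equipped with a degree `+1` differential `d` with `d ∘ d = 0`
satisfying the graded Leibniz rule. -/
structure ConnCDGA (k : Type u) [Field k] (A : Type v) [Ring A] [Algebra k A] where
  gr : ℤ → Submodule k A
  decomp : DirectSum.Decomposition gr
  one_mem : (1 : A) ∈ gr 0
  mul_mem : ∀ {i j : ℤ} {a b : A}, a ∈ gr i → b ∈ gr j → a * b ∈ gr (i + j)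
  connected : ∀ i : ℤ, i < 0 → gr i = ⊥
  deg_zero : gr 0 = Submodule.span k {(1 : A)}
  d : A →ₗ[k] A
  d_mem : ∀ {i : ℤ} {a : A}, a ∈ gr i → d a ∈ gr (i + 1)
  d_sq : ∀ a : A, d (d a) = 0
  leibniz : ∀ {i j : ℤ} {a b : A}, a ∈ gr i → b ∈ gr j →
    d (a * b) = d a * b + ((-1 : k) ^ i) • (a * d b)

variable {k : Type u} [Field k] {A : Type v} [Ring A] [Algebra k A]
variable {B : Type v} [Ring B] [Algebra k B]

/-- A DG algebra automorphism of a connected cochain DG algebra: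
a degree-preserving `k`-algebra automorphism commuting with the differential. -/
structure IsDGAut (𝒜 : ConnCDGA k A) (φ : A → A) : Prop where
  bij : Function.Bijective φ
  map_add : ∀ x y : A, φ (x + y) = φ x + φ y
  map_mul : ∀ x y : A, φ (x * y) = φ x * φ y
  map_one : φ 1 = 1
  map_ksmul : ∀ (c : k) (x : A), φ (c • x) = c • φ x
  map_gr : ∀ {i : ℤ} {x : A}, x ∈ 𝒜.gr i → φ x ∈ 𝒜.gr i
  map_d : ∀ x : A, φ (𝒜.d x) = 𝒜.d (φ x)

/-- A left DG module over a connected cochain DG algebra `𝒜`. -/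
structure DGMod (𝒜 : ConnCDGA k A) (M : Type w) [AddCommGroup M] [Module k M] where
  smul : A → M → M
  smul_add : ∀ (a : A) (m n : M), smul a (m + n) = smul a m + smul a n
  add_smul : ∀ (a b : A) (m : M), smul (a + b) m = smul a m + smul b m
  mul_smul : ∀ (a b : A) (m : M), smul (a * b) m = smul a (smul b m)
  one_smul : ∀ m : M, smul 1 m = m
  ksmul_left : ∀ (c : k) (a : A) (m : M), smul (c • a) m = c • smul a m
  ksmul_right : ∀ (c : k) (a : A) (m : M), smul a (c • m) = c • smul a m
  gr : ℤ → Submodule k M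
  decomp : DirectSum.Decomposition gr
  smul_mem : ∀ {i j : ℤ} {a : A} {m : M}, a ∈ 𝒜.gr i → m ∈ gr j → smul a m ∈ gr (i + j)
  d : M →ₗ[k] M
  d_mem : ∀ {i : ℤ} {m : M}, m ∈ gr i → d m ∈ gr (i + 1)
  d_sq : ∀ m : M, d (d m) = 0
  leibniz : ∀ {i : ℤ} {a : A} (m : M), a ∈ 𝒜.gr i →
    d (smul a m) = smul (𝒜.d a) m + ((-1 : k) ^ i) • smul a (d m)

/-- A right DG module over a connected cochain DG algebra `𝒜`
(equivalently, a left DG module over the opposite DG algebra `𝒜ᵒᵖ`). -/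
structure DGRMod (𝒜 : ConnCDGA k A) (M : Type w) [AddCommGroup M] [Module k M] where
  rsmul : M → A → M
  rsmul_add : ∀ (a : A) (m n : M), rsmul (m + n) a = rsmul m a + rsmul n a
  add_rsmul : ∀ (a b : A) (m : M), rsmul m (a + b) = rsmul m a + rsmul m b
  mul_rsmul : ∀ (a b : A) (m : M), rsmul m (a * b) = rsmul (rsmul m a) b
  one_rsmul : ∀ m : M, rsmul m 1 = m
  krsmul_left : ∀ (c : k) (a : A) (m : M), rsmul (c • m) a = c • rsmul m a
  krsmul_right : ∀ (c : k) (a : A) (m : M), rsmul m (c • a) = c • rsmul m a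
  gr : ℤ → Submodule k M
  decomp : DirectSum.Decomposition gr
  rsmul_mem : ∀ {i j : ℤ} {m : M} {a : A}, m ∈ gr i → a ∈ 𝒜.gr j → rsmul m a ∈ gr (i + j)
  d : M →ₗ[k] M
  d_mem : ∀ {i : ℤ} {m : M}, m ∈ gr i → d m ∈ gr (i + 1)
  d_sq : ∀ m : M, d (d m) = 0
  leibniz : ∀ {i : ℤ} {m : M} (a : A), m ∈ gr i →
    d (rsmul m a) = rsmul (d m) a + ((-1 : k) ^ i) • rsmul m (𝒜.d a)

/-- A DG bimodule over a connected cochain DG algebra `𝒜`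
(equivalently, a DG module over the enveloping DG algebra `𝒜ᵉ = 𝒜 ⊗ 𝒜ᵒᵖ`). -/
structure DGBimod (𝒜 : ConnCDGA k A) (M : Type w) [AddCommGroup M] [Module k M]
    extends DGMod 𝒜 M where
  rsmul : M → A → M
  rsmul_add : ∀ (a : A) (m n : M), rsmul (m + n) a = rsmul m a + rsmul n a
  add_rsmul : ∀ (a b : A) (m : M), rsmul m (a + b) = rsmul m a + rsmul m b
  mul_rsmul : ∀ (a b : A) (m : M), rsmul m (a * b) = rsmul (rsmul m a) b
  one_rsmul : ∀ m : M, rsmul m 1 = m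
  krsmul_left : ∀ (c : k) (a : A) (m : M), rsmul (c • m) a = c • rsmul m a
  krsmul_right : ∀ (c : k) (a : A) (m : M), rsmul m (c • a) = c • rsmul m a
  rsmul_mem : ∀ {i j : ℤ} {m : M} {a : A}, m ∈ gr i → a ∈ 𝒜.gr j → rsmul m a ∈ gr (i + j)
  rleibniz : ∀ {i : ℤ} {m : M} (a : A), m ∈ gr i →
    d (rsmul m a) = rsmul (d m) a + ((-1 : k) ^ i) • rsmul m (𝒜.d a)
  smul_rsmul_assoc : ∀ (a : A) (m : M) (b : A), rsmul (smul a m) b = smul a (rsmul m b)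

/-- The underlying right DG module of a DG bimodule. -/
def DGBimod.toDGRMod {𝒜 : ConnCDGA k A} {M : Type w} [AddCommGroup M] [Module k M]
    (ℳ : DGBimod 𝒜 M) : DGRMod 𝒜 M where
  rsmul := ℳ.rsmul
  rsmul_add := ℳ.rsmul_add
  add_rsmul := ℳ.add_rsmul
  mul_rsmul := ℳ.mul_rsmul
  one_rsmul := ℳ.one_rsmul
  krsmul_left := ℳ.krsmul_left
  krsmul_right := ℳ.krsmul_right
  gr := ℳ.gr
  decomp := ℳ.decomp
  rsmul_mem := ℳ.rsmul_mem
  d := ℳ.d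
  d_mem := ℳ.d_mem
  d_sq := ℳ.d_sq
  leibniz := ℳ.rleibniz

/-- The torsion DG submodule `Γ_𝔪(M) = {m ∈ M ∣ A^{≥n} m = 0 for some n ≥ 1}`. -/
def DGMod.torsion {𝒜 : ConnCDGA k A} {M : Type w} [AddCommGroup M] [Module k M]
    (ℳ : DGMod 𝒜 M) : Set M :=
  {m : M | ∃ n : ℤ, 1 ≤ n ∧ ∀ a ∈ (⨆ (i : ℤ) (_ : n ≤ i), 𝒜.gr i), ℳ.smul a m = 0}

/-- `M` is acyclic, i.e. `H(M) = 0`. -/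
def DGMod.IsAcyclic {𝒜 : ConnCDGA k A} {M : Type w} [AddCommGroup M] [Module k M]
    (ℳ : DGMod 𝒜 M) : Prop :=
  ∀ m : M, ℳ.d m = 0 → ∃ x : M, ℳ.d x = m

/-- `M` is acyclic, i.e. `H(M) = 0` (right module version). -/
def DGRMod.IsAcyclic {𝒜 : ConnCDGA k A} {M : Type w} [AddCommGroup M] [Module k M]
    (ℳ : DGRMod 𝒜 M) : Prop :=
  ∀ m : M, ℳ.d m = 0 → ∃ x : M, ℳ.d x = m

/-- A morphism of left DG modules: a degree-0 `A`-linear chain map. -/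
structure DGHom {𝒜 : ConnCDGA k A} {M : Type w} {N : Type w}
    [AddCommGroup M] [Module k M] [AddCommGroup N] [Module k N]
    (ℳ : DGMod 𝒜 M) (𝒩 : DGMod 𝒜 N) where
  toFun : M → N
  map_add : ∀ x y : M, toFun (x + y) = toFun x + toFun y
  map_ksmul : ∀ (c : k) (x : M), toFun (c • x) = c • toFun x
  map_smul : ∀ (a : A) (x : M), toFun (ℳ.smul a x) = 𝒩.smul a (toFun x)
  map_gr : ∀ {i : ℤ} {x : M}, x ∈ ℳ.gr i → toFun x ∈ 𝒩.gr i
  map_d : ∀ x : M, toFun (ℳ.d x) = 𝒩.d (toFun x)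

/-- A homogeneous degree-`i` element of the Hom-complex `Hom_A(M, N)` of left DG modules:
an `A`-linear map of degree `i` (with Koszul sign rule `f(am) = (-1)^{i|a|} a f(m)`). -/
structure HomDeg {𝒜 : ConnCDGA k A} {M : Type w} {N : Type w}
    [AddCommGroup M] [Module k M] [AddCommGroup N] [Module k N]
    (ℳ : DGMod 𝒜 M) (𝒩 : DGMod 𝒜 N) (i : ℤ) where
  toFun : M → N
  map_add : ∀ x y : M, toFun (x + y) = toFun x + toFun y
  map_ksmul : ∀ (c : k) (x : M), toFun (c • x) = c • toFun x
  map_gr : ∀ {j : ℤ} {x : M}, x ∈ ℳ.gr j → toFun x ∈ 𝒩.gr (j + i)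
  map_smul : ∀ {j : ℤ} {a : A} (x : M), a ∈ 𝒜.gr j →
    toFun (ℳ.smul a x) = ((-1 : k) ^ (i * j)) • 𝒩.smul a (toFun x)

/-- A homogeneous degree-`i` element of the Hom-complex `Hom_{Aᵒᵖ}(M, N)` of right DG modules. -/
structure RHomDeg {𝒜 : ConnCDGA k A} {M : Type w} {N : Type w}
    [AddCommGroup M] [Module k M] [AddCommGroup N] [Module k N]
    (ℳ : DGRMod 𝒜 M) (𝒩 : DGRMod 𝒜 N) (i : ℤ) where
  toFun : M → N
  map_add : ∀ x y : M, toFun (x + y) = toFun x + toFun y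
  map_ksmul : ∀ (c : k) (x : M), toFun (c • x) = c • toFun x
  map_gr : ∀ {j : ℤ} {x : M}, x ∈ ℳ.gr j → toFun x ∈ 𝒩.gr (j + i)
  map_rsmul : ∀ (x : M) (a : A), toFun (ℳ.rsmul x a) = 𝒩.rsmul (toFun x) a

/-- A homogeneous degree-`i` element of the Hom-complex `Hom_{Aᵉ}(M, N)` of DG bimodules. -/
structure BiHomDeg {𝒜 : ConnCDGA k A} {M : Type w} {N : Type w}
    [AddCommGroup M] [Module k M] [AddCommGroup N] [Module k N]
    (ℳ : DGBimod 𝒜 M) (𝒩 : DGBimod 𝒜 N) (i : ℤ)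
    extends HomDeg ℳ.toDGMod 𝒩.toDGMod i where
  map_rsmul : ∀ (x : M) (a : A), toFun (ℳ.rsmul x a) = 𝒩.rsmul (toFun x) a

/-- The Hom-complex `Hom_A(M,N)` of left DG modules is acyclic:
every homogeneous cocycle is a coboundary (differential `∂f = ∂_N ∘ f - (-1)^{|f|} f ∘ ∂_M`). -/
def HomAcyclic {𝒜 : ConnCDGA k A} {M : Type w} {N : Type w}
    [AddCommGroup M] [Module k M] [AddCommGroup N] [Module k N]
    (ℳ : DGMod 𝒜 M) (𝒩 : DGMod 𝒜 N) : Prop :=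
  ∀ (i : ℤ) (f : HomDeg ℳ 𝒩 i),
    (∀ x : M, 𝒩.d (f.toFun x) = ((-1 : k) ^ i) • f.toFun (ℳ.d x)) →
    ∃ g : HomDeg ℳ 𝒩 (i - 1),
      ∀ x : M, f.toFun x = 𝒩.d (g.toFun x) - ((-1 : k) ^ (i - 1)) • g.toFun (ℳ.d x)

/-- The Hom-complex of right DG modules is acyclic. -/
def RHomAcyclic {𝒜 : ConnCDGA k A} {M : Type w} {N : Type w}
    [AddCommGroup M] [Module k M] [AddCommGroup N] [Module k N]
    (ℳ : DGRMod 𝒜 M) (𝒩 : DGRMod 𝒜 N) : Prop :=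
  ∀ (i : ℤ) (f : RHomDeg ℳ 𝒩 i),
    (∀ x : M, 𝒩.d (f.toFun x) = ((-1 : k) ^ i) • f.toFun (ℳ.d x)) →
    ∃ g : RHomDeg ℳ 𝒩 (i - 1),
      ∀ x : M, f.toFun x = 𝒩.d (g.toFun x) - ((-1 : k) ^ (i - 1)) • g.toFun (ℳ.d x)

/-- The Hom-complex of DG bimodules is acyclic. -/
def BiHomAcyclic {𝒜 : ConnCDGA k A} {M : Type w} {N : Type w}
    [AddCommGroup M] [Module k M] [AddCommGroup N] [Module k N]
    (ℳ : DGBimod 𝒜 M) (𝒩 : DGBimod 𝒜 N) : Prop :=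
  ∀ (i : ℤ) (f : BiHomDeg ℳ 𝒩 i),
    (∀ x : M, 𝒩.d (f.toFun x) = ((-1 : k) ^ i) • f.toFun (ℳ.d x)) →
    ∃ g : BiHomDeg ℳ 𝒩 (i - 1),
      ∀ x : M, f.toFun x = 𝒩.d (g.toFun x) - ((-1 : k) ^ (i - 1)) • g.toFun (ℳ.d x)

/-- A DG module over the tensor product DG algebra `𝒜 ⊗ ℬ`, modelled as a complex with
commuting (up to Koszul sign) left `𝒜`- and left `ℬ`- DG module structures. -/
structure DGBiActMod (𝒜 : ConnCDGA k A) (ℬ : ConnCDGA k B) (M : Type w)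
    [AddCommGroup M] [Module k M] extends DGMod 𝒜 M where
  bsmul : B → M → M
  bsmul_add : ∀ (b : B) (m n : M), bsmul b (m + n) = bsmul b m + bsmul b n
  add_bsmul : ∀ (b c : B) (m : M), bsmul (b + c) m = bsmul b m + bsmul c m
  mul_bsmul : ∀ (b c : B) (m : M), bsmul (b * c) m = bsmul b (bsmul c m)
  one_bsmul : ∀ m : M, bsmul 1 m = m
  kbsmul_left : ∀ (c : k) (b : B) (m : M), bsmul (c • b) m = c • bsmul b m
  kbsmul_right : ∀ (c : k) (b : B) (m : M), bsmul b (c • m) = c • bsmul b m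
  bsmul_mem : ∀ {i j : ℤ} {b : B} {m : M}, b ∈ ℬ.gr i → m ∈ gr j → bsmul b m ∈ gr (i + j)
  bleibniz : ∀ {i : ℤ} {b : B} (m : M), b ∈ ℬ.gr i →
    d (bsmul b m) = bsmul (ℬ.d b) m + ((-1 : k) ^ i) • bsmul b (d m)
  ab_compat : ∀ {i j : ℤ} {a : A} {b : B} (m : M), a ∈ 𝒜.gr i → b ∈ ℬ.gr j →
    smul a (bsmul b m) = ((-1 : k) ^ (i * j)) • bsmul b (smul a m)

/-- A homogeneous degree-`i` element of the Hom-complex `Hom_{A⊗B}(M, N)`. -/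
structure ABHomDeg {𝒜 : ConnCDGA k A} {ℬ : ConnCDGA k B} {M : Type w} {N : Type w}
    [AddCommGroup M] [Module k M] [AddCommGroup N] [Module k N]
    (ℳ : DGBiActMod 𝒜 ℬ M) (𝒩 : DGBiActMod 𝒜 ℬ N) (i : ℤ)
    extends HomDeg ℳ.toDGMod 𝒩.toDGMod i where
  map_bsmul : ∀ {j : ℤ} {b : B} (x : M), b ∈ ℬ.gr j →
    toFun (ℳ.bsmul b x) = ((-1 : k) ^ (i * j)) • 𝒩.bsmul b (toFun x)

/-- The Hom-complex `Hom_{A⊗B}(M, N)` is acyclic. -/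
def ABHomAcyclic {𝒜 : ConnCDGA k A} {ℬ : ConnCDGA k B} {M : Type w} {N : Type w}
    [AddCommGroup M] [Module k M] [AddCommGroup N] [Module k N]
    (ℳ : DGBiActMod 𝒜 ℬ M) (𝒩 : DGBiActMod 𝒜 ℬ N) : Prop :=
  ∀ (i : ℤ) (f : ABHomDeg ℳ 𝒩 i),
    (∀ x : M, 𝒩.d (f.toFun x) = ((-1 : k) ^ i) • f.toFun (ℳ.d x)) →
    ∃ g : ABHomDeg ℳ 𝒩 (i - 1),
      ∀ x : M, f.toFun x = 𝒩.d (g.toFun x) - ((-1 : k) ^ (i - 1)) • g.toFun (ℳ.d x)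

/-- A homogeneous degree-`i` element of the Hom-complex `Hom_A(P, Hom_B(Q, E))`,
where `E` is a DG `A⊗B`-module, encoded as a two-variable function. -/
structure HomHomDeg {𝒜 : ConnCDGA k A} {ℬ : ConnCDGA k B}
    {P : Type w} {Q : Type w} {E : Type w}
    [AddCommGroup P] [Module k P] [AddCommGroup Q] [Module k Q]
    [AddCommGroup E] [Module k E]
    (MP : DGMod 𝒜 P) (MQ : DGMod ℬ Q) (ME : DGBiActMod 𝒜 ℬ E) (i : ℤ) where
  toFun : P → Q → E
  map_add₁ : ∀ (x y : P) (q : Q), toFun (x + y) q = toFun x q + toFun y q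
  map_ksmul₁ : ∀ (c : k) (x : P) (q : Q), toFun (c • x) q = c • toFun x q
  map_add₂ : ∀ (x : P) (q r : Q), toFun x (q + r) = toFun x q + toFun x r
  map_ksmul₂ : ∀ (c : k) (x : P) (q : Q), toFun x (c • q) = c • toFun x q
  map_gr : ∀ {j l : ℤ} {x : P} {q : Q}, x ∈ MP.gr j → q ∈ MQ.gr l →
    toFun x q ∈ ME.gr (i + j + l)
  map_bsmul : ∀ {j m : ℤ} {x : P} {b : B} (q : Q), x ∈ MP.gr j → b ∈ ℬ.gr m →
    toFun x (MQ.smul b q) = ((-1 : k) ^ ((i + j) * m)) • ME.bsmul b (toFun x q)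
  map_asmul : ∀ {m : ℤ} {a : A} (x : P) (q : Q), a ∈ 𝒜.gr m →
    toFun (MP.smul a x) q = ((-1 : k) ^ (i * m)) • ME.smul a (toFun x q)

/-- A DG pairing `θ : X × Y → A` between a DG `A`-bimodule `X` and a DG `A`-bimodule `Y`:
`A`-balanced, left and right `A`-linear, graded and compatible with the differentials.
Such a map induces a morphism of DG `A`-bimodules `X ⊗_A Y → A`. -/
structure IsDGPairing {𝒜 : ConnCDGA k A} {X : Type w} {Y : Type w}
    [AddCommGroup X] [Module k X] [AddCommGroup Y] [Module k Y]
    (𝕏 : DGBimod 𝒜 X) (𝕐 : DGBimod 𝒜 Y) (θ : X →ₗ[k] Y →ₗ[k] A) : Prop where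
  balanced : ∀ (a : A) (x : X) (y : Y), θ (𝕏.rsmul x a) y = θ x (𝕐.smul a y)
  left_lin : ∀ (a : A) (x : X) (y : Y), θ (𝕏.smul a x) y = a * θ x y
  right_lin : ∀ (a : A) (x : X) (y : Y), θ x (𝕐.rsmul y a) = θ x y * a
  graded : ∀ {i j : ℤ} {x : X} {y : Y}, x ∈ 𝕏.gr i → y ∈ 𝕐.gr j → θ x y ∈ 𝒜.gr (i + j)
  chain : ∀ {i : ℤ} {x : X} (y : Y), x ∈ 𝕏.gr i →
    𝒜.d (θ x y) = θ (𝕏.d x) y + ((-1 : k) ^ i) • θ x (𝕐.d y)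

/-- The `k`-subspace of `X ⊗_k Y` spanned by the elements `xa ⊗ y - x ⊗ ay`;
quotienting by it yields `X ⊗_A Y`. -/
def balancedRel {𝒜 : ConnCDGA k A} {X : Type w} {Y : Type w}
    [AddCommGroup X] [Module k X] [AddCommGroup Y] [Module k Y]
    (𝕏 : DGBimod 𝒜 X) (𝕐 : DGBimod 𝒜 Y) : Submodule k (TensorProduct k X Y) :=
  Submodule.span k {z | ∃ (a : A) (x : X) (y : Y),
    z = (𝕏.rsmul x a) ⊗ₜ[k] y - x ⊗ₜ[k] (𝕐.smul a y)}

/-- `G : A → L` is an isomorphism of DG `A`-bimodules `Σⁱ A(φ) → L`, where `Σⁱ A(φ)`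
is the shift of `A` by `i` twisted on the right by the DG automorphism `φ`
(free on a generator `e = 1` in degree `-i`, right action `e·a = (-1)^{i|a|} φ(a) e`). -/
def IsShiftTwistIso {𝒜 : ConnCDGA k A} {L : Type w} [AddCommGroup L] [Module k L]
    (𝕃 : DGBimod 𝒜 L) (i : ℤ) (φ : A → A) (G : A → L) : Prop :=
  Function.Bijective G ∧
  (∀ x y : A, G (x + y) = G x + G y) ∧
  (∀ (c : k) (x : A), G (c • x) = c • G x) ∧
  (∀ (j : ℤ) (a : A), a ∈ 𝒜.gr j ↔ G a ∈ 𝕃.gr (j - i)) ∧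
  (∀ a : A, G (𝒜.d a) = 𝕃.d (G a)) ∧
  (∀ a x : A, G (a * x) = 𝕃.smul a (G x)) ∧
  (∀ (j : ℤ) (x a : A), a ∈ 𝒜.gr j →
    𝕃.rsmul (G x) a = ((-1 : k) ^ (i * j)) • G (x * φ a))

/-- The `k`-subspace of `X ⊗_k F` (X a right DG module, F a left DG module) spanned by
the elements `xa ⊗ u - x ⊗ au`; quotienting by it yields `X ⊗_A F`. -/
def balRL {𝒜 : ConnCDGA k A} {X : Type w} {F : Type w}
    [AddCommGroup X] [Module k X] [AddCommGroup F] [Module k F]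
    (𝒳 : DGRMod 𝒜 X) (ℱ : DGMod 𝒜 F) : Submodule k (TensorProduct k X F) :=
  Submodule.span k {z | ∃ (a : A) (x : X) (u : F),
    z = (𝒳.rsmul x a) ⊗ₜ[k] u - x ⊗ₜ[k] (ℱ.smul a u)}

/-- The tensor product `X ⊗_A F` of a right DG module with a left DG module. -/
abbrev TensRL {𝒜 : ConnCDGA k A} {X : Type w} {F : Type w}
    [AddCommGroup X] [Module k X] [AddCommGroup F] [Module k F]
    (𝒳 : DGRMod 𝒜 X) (ℱ : DGMod 𝒜 F) :=
  TensorProduct k X F ⧸ balRL 𝒳 ℱ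

/-- The degree-`m` graded piece of `X ⊗_A F`. -/
def tgrRL {𝒜 : ConnCDGA k A} {X : Type w} {F : Type w}
    [AddCommGroup X] [Module k X] [AddCommGroup F] [Module k F]
    (𝒳 : DGRMod 𝒜 X) (ℱ : DGMod 𝒜 F) (m : ℤ) : Submodule k (TensRL 𝒳 ℱ) :=
  Submodule.span k {t | ∃ (p q : ℤ) (x : X) (u : F), x ∈ 𝒳.gr p ∧ u ∈ ℱ.gr q ∧
    p + q = m ∧ t = Submodule.Quotient.mk (x ⊗ₜ[k] u)}

/-- A homogeneous degree-`n` element of the Matlis dual complex `(X ⊗_A F)'`: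
a `k`-linear functional on `X ⊗_A F` supported on the graded piece of degree `-n`. -/
structure DualDegRL {𝒜 : ConnCDGA k A} {X : Type w} {F : Type w}
    [AddCommGroup X] [Module k X] [AddCommGroup F] [Module k F]
    (𝒳 : DGRMod 𝒜 X) (ℱ : DGMod 𝒜 F) (n : ℤ) where
  toFun : TensRL 𝒳 ℱ → k
  map_add : ∀ s t : TensRL 𝒳 ℱ, toFun (s + t) = toFun s + toFun t
  map_ksmul : ∀ (c : k) (t : TensRL 𝒳 ℱ), toFun (c • t) = c * toFun t
  supp : ∀ (m : ℤ), m ≠ -n → ∀ t ∈ tgrRL 𝒳 ℱ m, toFun t = 0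

/-- A homogeneous degree-`n` element of the Hom-complex `Hom_A(F, X')`, where `X'`
is the Matlis dual of the right DG module `X`, viewed as a left DG module via
`(a·f)(x) = (-1)^{|a||f|} f(xa)`; encoded as a two-variable function `F → X → k`. -/
structure HomToDualDeg {𝒜 : ConnCDGA k A} {X : Type w} {F : Type w}
    [AddCommGroup X] [Module k X] [AddCommGroup F] [Module k F]
    (𝒳 : DGRMod 𝒜 X) (ℱ : DGMod 𝒜 F) (n : ℤ) where
  toFun : F → X → k
  map_add₁ : ∀ (u v : F) (x : X), toFun (u + v) x = toFun u x + toFun v x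
  map_ksmul₁ : ∀ (c : k) (u : F) (x : X), toFun (c • u) x = c * toFun u x
  map_add₂ : ∀ (u : F) (x y : X), toFun u (x + y) = toFun u x + toFun u y
  map_ksmul₂ : ∀ (c : k) (u : F) (x : X), toFun u (c • x) = c * toFun u x
  supp : ∀ {q j : ℤ} {u : F} {x : X}, u ∈ ℱ.gr q → x ∈ 𝒳.gr j → j ≠ -(n + q) →
    toFun u x = 0
  map_smul : ∀ {m q : ℤ} {a : A} {u : F} (x : X), a ∈ 𝒜.gr m → u ∈ ℱ.gr q →
    toFun (ℱ.smul a u) x = ((-1 : k) ^ (m * q)) * toFun u (𝒳.rsmul x a)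

/-!
Currying identifies `Hom_A(N, Hom_B(Q, E))` with `Hom_{A⊗B}(N ⊗_k Q, E)` compatibly with the
differentials, so it suffices that `N ⊗_k Q` is an acyclic DG `A ⊗ B`-module. Over a field an
acyclic complex is contractible: every linear map `d` has a generalized inverse `S` (`d S d = d`),
its homogeneous component of degree `-1` is again one, and `h = S - S S d` then satisfies
`d h + h d = 1`. The homotopy `h ⊗ 1` contracts `N ⊗_k Q`.
-/

section Signs

variable {K : Type*} [DivisionRing K]

theorem neg_one_zpow_add (m n : ℤ) : (-1 : K) ^ (m + n) = (-1) ^ m * (-1) ^ n :=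
  zpow_add₀ (neg_ne_zero.2 one_ne_zero) m n

theorem neg_one_zpow_eq_of_even_sub {m n : ℤ} (h : Even (m - n)) :
    (-1 : K) ^ m = (-1) ^ n := by
  rw [show m = m - n + n by ring, neg_one_zpow_add, h.neg_one_zpow, one_mul]

theorem neg_one_zpow_add_one (m : ℤ) : (-1 : K) ^ (m + 1) = -(-1) ^ m := by
  rw [neg_one_zpow_add, zpow_one, mul_neg_one]

theorem neg_one_zpow_sub_one (m : ℤ) : (-1 : K) ^ (m - 1) = -(-1) ^ m := by
  rw [← neg_neg ((-1 : K) ^ (m - 1)), ← neg_one_zpow_add_one, sub_add_cancel]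

end Signs

section GradedLinearMap

open DirectSum

variable {R : Type*} [Semiring R] {ι : Type*} [DecidableEq ι]
  {M P : Type*} [AddCommMonoid M] [Module R M] [AddCommMonoid P] [Module R P]
  (𝒢 : ι → Submodule R M) [Decomposition 𝒢]

noncomputable def liftHomogeneous (F : ∀ j, 𝒢 j →ₗ[R] P) : M →ₗ[R] P :=
  toModule R ι P F ∘ₗ (decomposeLinearEquiv 𝒢).toLinearMap

theorem liftHomogeneous_apply_of_mem (F : ∀ j, 𝒢 j →ₗ[R] P) {j : ι} {x : M} (hx : x ∈ 𝒢 j) :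
    liftHomogeneous 𝒢 F x = F j ⟨x, hx⟩ := by
  show toModule R ι P F (decomposeLinearEquiv 𝒢 ((⟨x, hx⟩ : 𝒢 j) : M)) = _
  rw [decomposeLinearEquiv_apply_coe, toModule_lof]

noncomputable def gradedProj (j : ι) : M →ₗ[R] M :=
  (𝒢 j).subtype ∘ₗ component R ι (fun i => 𝒢 i) j ∘ₗ (decomposeLinearEquiv 𝒢).toLinearMap

theorem gradedProj_apply (j : ι) (x : M) : gradedProj 𝒢 j x = decompose 𝒢 x j := rfl

end GradedLinearMap

section HomogeneousPart

open DirectSum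

variable {R : Type*} [Semiring R] {M : Type*} [AddCommMonoid M] [Module R M]
  (𝒢 : ℤ → Submodule R M) [Decomposition 𝒢]

theorem gradedProj_comp_of_mem {f : M →ₗ[R] M} {n : ℤ}
    (hf : ∀ {j x}, x ∈ 𝒢 j → f x ∈ 𝒢 (j + n)) (j : ℤ) :
    f ∘ₗ gradedProj 𝒢 j = gradedProj 𝒢 (j + n) ∘ₗ f := by
  refine decompose_lhom_ext 𝒢 fun i => LinearMap.ext fun ⟨x, hx⟩ => ?_
  simp only [LinearMap.comp_apply, Submodule.subtype_apply, gradedProj_apply]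
  by_cases hij : i = j
  · subst hij
    rw [decompose_of_mem_same 𝒢 hx, decompose_of_mem_same 𝒢 (hf hx)]
  · rw [decompose_of_mem_ne 𝒢 hx hij, decompose_of_mem_ne 𝒢 (hf hx) (by omega), map_zero]

noncomputable def homogeneousPart (f : M →ₗ[R] M) (n : ℤ) : M →ₗ[R] M :=
  liftHomogeneous 𝒢 fun j => gradedProj 𝒢 (j + n) ∘ₗ f ∘ₗ (𝒢 j).subtype

theorem homogeneousPart_apply_of_mem (f : M →ₗ[R] M) (n : ℤ) {j : ℤ} {x : M} (hx : x ∈ 𝒢 j) :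
    homogeneousPart 𝒢 f n x = gradedProj 𝒢 (j + n) (f x) :=
  liftHomogeneous_apply_of_mem 𝒢 _ hx

theorem homogeneousPart_mem (f : M →ₗ[R] M) (n : ℤ) {j : ℤ} {x : M} (hx : x ∈ 𝒢 j) :
    homogeneousPart 𝒢 f n x ∈ 𝒢 (j + n) := by
  rw [homogeneousPart_apply_of_mem 𝒢 f n hx]
  exact (decompose 𝒢 (f x) (j + n)).2

theorem comp_homogeneousPart_comp_of_comp_comp {d S : M →ₗ[R] M}
    (hd : ∀ {j x}, x ∈ 𝒢 j → d x ∈ 𝒢 (j + 1)) (hS : d ∘ₗ S ∘ₗ d = d) :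
    d ∘ₗ homogeneousPart 𝒢 S (-1) ∘ₗ d = d := by
  refine decompose_lhom_ext 𝒢 fun j => LinearMap.ext fun ⟨x, hx⟩ => ?_
  simp only [LinearMap.comp_apply, Submodule.subtype_apply]
  rw [homogeneousPart_apply_of_mem 𝒢 S (-1) (hd hx), ← LinearMap.comp_apply d,
    gradedProj_comp_of_mem 𝒢 hd, LinearMap.comp_apply,
    show d (S (d x)) = (d ∘ₗ S ∘ₗ d) x from rfl, hS, gradedProj_apply, add_neg_cancel_right,
    decompose_of_mem_same 𝒢 (hd hx)]

end HomogeneousPart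

section ContractingHomotopy

variable {K V W : Type*} [DivisionRing K] [AddCommGroup V] [Module K V]
  [AddCommGroup W] [Module K W]

theorem LinearMap.exists_comp_comp_eq_self (d : V →ₗ[K] W) :
    ∃ S : W →ₗ[K] V, d ∘ₗ S ∘ₗ d = d := by
  obtain ⟨s, hs⟩ := d.rangeRestrict.exists_rightInverse_of_surjective d.range_rangeRestrict
  obtain ⟨S, hS⟩ := LinearMap.exists_extend s
  refine ⟨S, LinearMap.ext fun x => ?_⟩
  have hSd : S (d x) = s (d.rangeRestrict x) := congr($hS (d.rangeRestrict x))
  simpa [hSd] using congr(($hs (d.rangeRestrict x) : W))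

theorem comp_add_comp_eq_id_of_exact {d S : V →ₗ[K] V} (hdd : d ∘ₗ d = 0)
    (hexact : LinearMap.ker d ≤ LinearMap.range d) (hS : d ∘ₗ S ∘ₗ d = d) :
    d ∘ₗ (S - S ∘ₗ S ∘ₗ d) + (S - S ∘ₗ S ∘ₗ d) ∘ₗ d = LinearMap.id := by
  have hdS : ∀ y ∈ LinearMap.range d, d (S y) = y := by
    rintro _ ⟨x, rfl⟩
    exact congr($hS x)
  refine LinearMap.ext fun x => ?_
  have hcycle : x - S (d x) ∈ LinearMap.range d := by
    refine hexact ?_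
    rw [LinearMap.mem_ker, map_sub, hdS _ ⟨x, rfl⟩, sub_self]
  have hdd' : d (d x) = 0 := congr($hdd x)
  simp only [LinearMap.add_apply, LinearMap.comp_apply, LinearMap.sub_apply, LinearMap.id_apply,
    ← map_sub, hdS _ hcycle, hdd', map_zero, sub_zero, sub_add_cancel]

end ContractingHomotopy

noncomputable instance ConnCDGA.instDecomposition (𝒜 : ConnCDGA k A) :
    DirectSum.Decomposition 𝒜.gr :=
  𝒜.decomp

noncomputable instance DGMod.instDecomposition {𝒜 : ConnCDGA k A} {M : Type w}
    [AddCommGroup M] [Module k M] (ℳ : DGMod 𝒜 M) : DirectSum.Decomposition ℳ.gr :=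
  ℳ.decomp

theorem DGMod.exists_contractingHomotopy {𝒜 : ConnCDGA k A} {N : Type w} [AddCommGroup N]
    [Module k N] (𝒩 : DGMod 𝒜 N) (hac : 𝒩.IsAcyclic) :
    ∃ h : N →ₗ[k] N, (∀ {j x}, x ∈ 𝒩.gr j → h x ∈ 𝒩.gr (j - 1)) ∧
      𝒩.d ∘ₗ h + h ∘ₗ 𝒩.d = LinearMap.id := by
  obtain ⟨S, hS⟩ := 𝒩.d.exists_comp_comp_eq_self
  set S' := homogeneousPart 𝒩.gr S (-1)
  have hS' : ∀ {j x}, x ∈ 𝒩.gr j → S' x ∈ 𝒩.gr (j - 1) := fun hx =>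
    homogeneousPart_mem 𝒩.gr S (-1) hx
  refine ⟨S' - S' ∘ₗ S' ∘ₗ 𝒩.d, fun {j x} hx => sub_mem (hS' hx) ?_,
    comp_add_comp_eq_id_of_exact (LinearMap.ext 𝒩.d_sq) (fun x hx => hac x hx)
      (comp_homogeneousPart_comp_of_comp_comp 𝒩.gr 𝒩.d_mem hS)⟩
  simpa using hS' (hS' (𝒩.d_mem hx))

section TensorGrading

open DirectSum TensorProduct

variable {R : Type*} [CommSemiring R] {ι : Type*}
  {M M' P : Type*} [AddCommMonoid M] [Module R M] [AddCommMonoid M'] [Module R M']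
  [AddCommMonoid P] [Module R P] (𝒢 : ι → Submodule R M) (ℋ : ι → Submodule R M')

theorem TensorProduct.ext_of_mem [DecidableEq ι] [Decomposition 𝒢] [Decomposition ℋ]
    {f g : M ⊗[R] M' →ₗ[R] P}
    (h : ∀ {j l x q}, x ∈ 𝒢 j → q ∈ ℋ l → f (x ⊗ₜ q) = g (x ⊗ₜ q)) : f = g :=
  TensorProduct.ext <| decompose_lhom_ext 𝒢 fun _ => LinearMap.ext fun ⟨_, hx⟩ =>
    decompose_lhom_ext ℋ fun _ => LinearMap.ext fun ⟨_, hq⟩ => h hx hq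

variable [AddMonoid ι]

def tensorGrading (m : ι) : Submodule R (M ⊗[R] M') :=
  Submodule.span R {t | ∃ j l x q, x ∈ 𝒢 j ∧ q ∈ ℋ l ∧ j + l = m ∧ t = x ⊗ₜ[R] q}

variable {𝒢 ℋ}

theorem tmul_mem_tensorGrading {j l m : ι} {x : M} {q : M'} (hx : x ∈ 𝒢 j) (hq : q ∈ ℋ l)
    (hm : j + l = m) : x ⊗ₜ[R] q ∈ tensorGrading 𝒢 ℋ m :=
  Submodule.subset_span ⟨j, l, x, q, hx, hq, hm, rfl⟩

theorem apply_mem_of_mem_tensorGrading {m : ι} {N : Submodule R P} (f : M ⊗[R] M' →ₗ[R] P)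
    (h : ∀ {j l x q}, x ∈ 𝒢 j → q ∈ ℋ l → j + l = m → f (x ⊗ₜ q) ∈ N) {t : M ⊗[R] M'}
    (ht : t ∈ tensorGrading 𝒢 ℋ m) : f t ∈ N :=
  (Submodule.span_le (p := N.comap f)).2
    (by rintro _ ⟨_, _, _, _, hx, hq, hm, rfl⟩; exact h hx hq hm) ht

variable (𝒢 ℋ) [DecidableEq ι]

noncomputable def tensorGradingPiece (p : ι × ι) :
    𝒢 p.1 ⊗[R] ℋ p.2 →ₗ[R] ⨁ m, tensorGrading 𝒢 ℋ m :=
  lof R ι (fun m => tensorGrading 𝒢 ℋ m) (p.1 + p.2) ∘ₗ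
    (TensorProduct.map (𝒢 p.1).subtype (ℋ p.2).subtype).codRestrict _ fun t =>
      TensorProduct.induction_on t (zero_mem _) (fun x q => tmul_mem_tensorGrading x.2 q.2 rfl)
        fun _ _ hs ht => by rw [map_add]; exact add_mem hs ht

variable [Decomposition 𝒢] [Decomposition ℋ]

noncomputable def decomposeTensorGrading : M ⊗[R] M' →ₗ[R] ⨁ m, tensorGrading 𝒢 ℋ m :=
  toModule R (ι × ι) _ (tensorGradingPiece 𝒢 ℋ) ∘ₗ
    (TensorProduct.directSum R R (fun j => 𝒢 j) (fun l => ℋ l)).toLinearMap ∘ₗ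
    TensorProduct.map (decomposeLinearEquiv 𝒢).toLinearMap (decomposeLinearEquiv ℋ).toLinearMap

variable {𝒢 ℋ}

theorem decomposeTensorGrading_tmul {j l : ι} {x : M} {q : M'} (hx : x ∈ 𝒢 j) (hq : q ∈ ℋ l) :
    decomposeTensorGrading 𝒢 ℋ (x ⊗ₜ q)
      = lof R ι _ (j + l) ⟨x ⊗ₜ q, tmul_mem_tensorGrading hx hq rfl⟩ := by
  have hx' := decomposeLinearEquiv_apply_coe 𝒢 j ⟨x, hx⟩
  have hq' := decomposeLinearEquiv_apply_coe ℋ l ⟨q, hq⟩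
  simp only [decomposeTensorGrading, LinearMap.comp_apply, map_tmul, LinearEquiv.coe_coe]
    at hx' hq' ⊢
  rw [hx', hq', directSum_lof_tmul_lof, toModule_lof]
  rfl

theorem decomposeTensorGrading_of_mem {m : ι} {t : M ⊗[R] M'} (ht : t ∈ tensorGrading 𝒢 ℋ m) :
    decomposeTensorGrading 𝒢 ℋ t = lof R ι _ m ⟨t, ht⟩ := by
  induction ht using Submodule.span_induction with
  | mem t ht =>
    obtain ⟨j, l, x, q, hx, hq, rfl, rfl⟩ := ht
    exact decomposeTensorGrading_tmul hx hq
  | zero => simp only [map_zero]; exact (map_zero _).symm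
  | add s t _ _ hs ht => rw [map_add, hs, ht, ← map_add]; rfl
  | smul c t _ ht => rw [map_smul, ht, ← map_smul]; rfl

variable (𝒢 ℋ)

noncomputable instance tensorGrading.decomposition :
    Decomposition (tensorGrading 𝒢 ℋ) :=
  Decomposition.ofLinearMap _ (decomposeTensorGrading 𝒢 ℋ)
    (TensorProduct.ext_of_mem 𝒢 ℋ fun hx hq => by
      simp [decomposeTensorGrading_tmul hx hq])
    (linearMap_ext _ fun m => LinearMap.ext fun ⟨t, ht⟩ => by
      simp [decomposeTensorGrading_of_mem ht])

end TensorGrading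

section SignOp

open DirectSum

variable {K : Type*} [Field K] {M : Type*} [AddCommGroup M] [Module K M]
  (𝒢 : ℤ → Submodule K M) [Decomposition 𝒢]

noncomputable def signOp (m : ℤ) : M →ₗ[K] M :=
  liftHomogeneous 𝒢 fun j => (-1 : K) ^ (m * j) • (𝒢 j).subtype

theorem signOp_of_mem (m : ℤ) {j : ℤ} {x : M} (hx : x ∈ 𝒢 j) :
    signOp 𝒢 m x = (-1 : K) ^ (m * j) • x :=
  liftHomogeneous_apply_of_mem 𝒢 _ hx

theorem signOp_add (m n : ℤ) : signOp 𝒢 (m + n) = signOp 𝒢 m ∘ₗ signOp 𝒢 n := by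
  refine decompose_lhom_ext 𝒢 fun j => LinearMap.ext fun ⟨x, hx⟩ => ?_
  simp only [LinearMap.comp_apply, Submodule.subtype_apply, signOp_of_mem 𝒢 _ hx, map_smul,
    smul_smul, ← neg_one_zpow_add, add_mul, add_comm]

theorem signOp_zero : signOp 𝒢 0 = LinearMap.id := by
  refine decompose_lhom_ext 𝒢 fun j => LinearMap.ext fun ⟨x, hx⟩ => ?_
  simp [signOp_of_mem 𝒢 _ hx]

end SignOp

namespace DGMod

variable {𝒜 : ConnCDGA k A} {M : Type w} [AddCommGroup M] [Module k M] (ℳ : DGMod 𝒜 M)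

def lsmul : A →ₗ[k] M →ₗ[k] M :=
  LinearMap.mk₂ k ℳ.smul ℳ.add_smul ℳ.ksmul_left ℳ.smul_add ℳ.ksmul_right

@[simp]
theorem lsmul_apply (a : A) (x : M) : ℳ.lsmul a x = ℳ.smul a x := rfl

theorem lsmul_mul (a b : A) : ℳ.lsmul (a * b) = ℳ.lsmul a ∘ₗ ℳ.lsmul b :=
  LinearMap.ext (ℳ.mul_smul a b)

theorem lsmul_one : ℳ.lsmul 1 = LinearMap.id :=
  LinearMap.ext ℳ.one_smul

end DGMod

section TensorDGModule

open TensorProduct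

variable {𝒜 : ConnCDGA k A} {ℬ : ConnCDGA k B} {N Q : Type w} [AddCommGroup N] [Module k N]
  [AddCommGroup Q] [Module k Q] (𝒩 : DGMod 𝒜 N) (MQ : DGMod ℬ Q)

noncomputable def tensorDiff : N ⊗[k] Q →ₗ[k] N ⊗[k] Q :=
  𝒩.d.rTensor Q + TensorProduct.map (signOp 𝒩.gr 1) MQ.d

noncomputable def tensorBAction : B →ₗ[k] Module.End k (N ⊗[k] Q) :=
  liftHomogeneous ℬ.gr fun m =>
    TensorProduct.mapBilinear (RingHom.id k) N Q N Q (signOp 𝒩.gr m) ∘ₗ MQ.lsmul ∘ₗ (ℬ.gr m).subtype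

variable {𝒩 MQ}

theorem tensorDiff_tmul {j : ℤ} {x : N} (hx : x ∈ 𝒩.gr j) (q : Q) :
    tensorDiff 𝒩 MQ (x ⊗ₜ q) = 𝒩.d x ⊗ₜ q + (-1 : k) ^ j • (x ⊗ₜ MQ.d q) := by
  simp [tensorDiff, signOp_of_mem 𝒩.gr 1 hx, smul_tmul']

theorem tensorBAction_of_mem {m : ℤ} {b : B} (hb : b ∈ ℬ.gr m) :
    tensorBAction 𝒩 MQ b = TensorProduct.map (signOp 𝒩.gr m) (MQ.lsmul b) :=
  liftHomogeneous_apply_of_mem ℬ.gr _ hb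

theorem tensorBAction_tmul {m j : ℤ} {b : B} {x : N} (hb : b ∈ ℬ.gr m) (hx : x ∈ 𝒩.gr j) (q : Q) :
    tensorBAction 𝒩 MQ b (x ⊗ₜ q) = (-1 : k) ^ (m * j) • (x ⊗ₜ MQ.smul b q) := by
  simp [tensorBAction_of_mem hb, signOp_of_mem 𝒩.gr m hx, smul_tmul']

variable (𝒩 MQ)

theorem tensorDiff_comp_tensorDiff : tensorDiff 𝒩 MQ ∘ₗ tensorDiff 𝒩 MQ = 0 :=
  TensorProduct.ext_of_mem 𝒩.gr MQ.gr fun {j _ x q} hx _ => by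
    rw [LinearMap.comp_apply, tensorDiff_tmul hx, map_add, map_smul, tensorDiff_tmul (𝒩.d_mem hx),
      tensorDiff_tmul hx, 𝒩.d_sq, MQ.d_sq, zero_tmul, tmul_zero, smul_zero, zero_add, add_zero,
      neg_one_zpow_add_one, neg_smul, neg_add_cancel, LinearMap.zero_apply]

theorem tensorDiff_comp_rTensor_lsmul {i : ℤ} {a : A} (ha : a ∈ 𝒜.gr i) :
    tensorDiff 𝒩 MQ ∘ₗ (𝒩.lsmul a).rTensor Q
      = (𝒩.lsmul (𝒜.d a)).rTensor Q + (-1 : k) ^ i • ((𝒩.lsmul a).rTensor Q ∘ₗ tensorDiff 𝒩 MQ) :=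
  TensorProduct.ext_of_mem 𝒩.gr MQ.gr fun {j _ x q} hx _ => by
    simp only [LinearMap.comp_apply, LinearMap.add_apply, LinearMap.smul_apply,
      LinearMap.rTensor_tmul, DGMod.lsmul_apply, tensorDiff_tmul (𝒩.smul_mem ha hx),
      tensorDiff_tmul hx, 𝒩.leibniz _ ha, map_add, map_smul, add_tmul, smul_add, smul_smul,
      ← neg_one_zpow_add, smul_tmul', add_assoc]

theorem tensorDiff_comp_tensorBAction {m : ℤ} {b : B} (hb : b ∈ ℬ.gr m) :
    tensorDiff 𝒩 MQ ∘ₗ tensorBAction 𝒩 MQ b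
      = tensorBAction 𝒩 MQ (ℬ.d b) + (-1 : k) ^ m • (tensorBAction 𝒩 MQ b ∘ₗ tensorDiff 𝒩 MQ) :=
  TensorProduct.ext_of_mem 𝒩.gr MQ.gr fun {j _ x q} hx _ => by
    simp only [LinearMap.comp_apply, LinearMap.add_apply, LinearMap.smul_apply,
      tensorBAction_tmul hb hx, tensorBAction_tmul (ℬ.d_mem hb) hx,
      tensorBAction_tmul hb (𝒩.d_mem hx), map_smul, map_add, tensorDiff_tmul hx, MQ.leibniz _ hb,
      tmul_add, tmul_smul, smul_add, smul_smul, ← neg_one_zpow_add]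
    rw [neg_one_zpow_eq_of_even_sub (m := m + m * (j + 1)) (n := m * j) ⟨m, by ring⟩,
      show (m + 1) * j = m * j + j by ring, show m + (j + m * j) = m * j + (j + m) by ring]
    abel

theorem rTensor_lsmul_comp_tensorBAction {i m : ℤ} {a : A} {b : B} (ha : a ∈ 𝒜.gr i)
    (hb : b ∈ ℬ.gr m) :
    (𝒩.lsmul a).rTensor Q ∘ₗ tensorBAction 𝒩 MQ b
      = (-1 : k) ^ (i * m) • (tensorBAction 𝒩 MQ b ∘ₗ (𝒩.lsmul a).rTensor Q) :=
  TensorProduct.ext_of_mem 𝒩.gr MQ.gr fun {j _ x q} hx _ => by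
    simp only [LinearMap.comp_apply, LinearMap.smul_apply, LinearMap.rTensor_tmul,
      DGMod.lsmul_apply, tensorBAction_tmul hb hx, tensorBAction_tmul hb (𝒩.smul_mem ha hx),
      map_smul, smul_smul, ← neg_one_zpow_add]
    rw [neg_one_zpow_eq_of_even_sub (m := i * m + m * (i + j)) (n := m * j) ⟨i * m, by ring⟩]

theorem tensorBAction_one : tensorBAction 𝒩 MQ 1 = LinearMap.id := by
  rw [tensorBAction_of_mem ℬ.one_mem, signOp_zero, DGMod.lsmul_one, TensorProduct.map_id]

theorem tensorBAction_mul (b c : B) :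
    tensorBAction 𝒩 MQ (b * c) = tensorBAction 𝒩 MQ b ∘ₗ tensorBAction 𝒩 MQ c := by
  have key : (LinearMap.mul k B).compr₂ (tensorBAction 𝒩 MQ)
      = (LinearMap.mul k (Module.End k (N ⊗[k] Q))).compl₁₂ (tensorBAction 𝒩 MQ)
          (tensorBAction 𝒩 MQ) :=
    DirectSum.decompose_lhom_ext ℬ.gr fun m => LinearMap.ext fun ⟨b, hb⟩ =>
      DirectSum.decompose_lhom_ext ℬ.gr fun n => LinearMap.ext fun ⟨c, hc⟩ => by
        simp only [LinearMap.comp_apply, LinearMap.compr₂_apply, LinearMap.compl₁₂_apply,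
          LinearMap.mul_apply', Submodule.subtype_apply, tensorBAction_of_mem hb,
          tensorBAction_of_mem hc, tensorBAction_of_mem (ℬ.mul_mem hb hc), signOp_add,
          DGMod.lsmul_mul, Module.End.mul_eq_comp, TensorProduct.map_comp]
  exact congr($key b c)

noncomputable def tensorDGModule : DGBiActMod 𝒜 ℬ (N ⊗[k] Q) where
  smul a := (𝒩.lsmul a).rTensor Q
  smul_add a := map_add _
  add_smul a b v := by simp only [map_add, LinearMap.rTensor_add, LinearMap.add_apply]
  mul_smul a b v := by rw [DGMod.lsmul_mul, LinearMap.rTensor_comp_apply]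
  one_smul v := by rw [DGMod.lsmul_one, LinearMap.rTensor_id, LinearMap.id_apply]
  ksmul_left c a v := by rw [map_smul, LinearMap.rTensor_smul, LinearMap.smul_apply]
  ksmul_right c a := map_smul _ c
  gr := tensorGrading 𝒩.gr MQ.gr
  decomp := inferInstance
  smul_mem ha hv := apply_mem_of_mem_tensorGrading _ (fun hx hq hm =>
    tmul_mem_tensorGrading (𝒩.smul_mem ha hx) hq (by rw [← hm, add_assoc])) hv
  d := tensorDiff 𝒩 MQ
  d_mem hv := apply_mem_of_mem_tensorGrading _ (fun hx hq hm => by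
    rw [tensorDiff_tmul hx]
    exact add_mem (tmul_mem_tensorGrading (𝒩.d_mem hx) hq (by omega))
      (Submodule.smul_mem _ _ (tmul_mem_tensorGrading hx (MQ.d_mem hq) (by omega)))) hv
  d_sq v := congr($(tensorDiff_comp_tensorDiff 𝒩 MQ) v)
  leibniz v ha := congr($(tensorDiff_comp_rTensor_lsmul 𝒩 MQ ha) v)
  bsmul b := tensorBAction 𝒩 MQ b
  bsmul_add b := map_add _
  add_bsmul b c v := by rw [map_add, LinearMap.add_apply]
  mul_bsmul b c v := by rw [tensorBAction_mul, LinearMap.comp_apply]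
  one_bsmul v := by rw [tensorBAction_one, LinearMap.id_apply]
  kbsmul_left c b v := by rw [map_smul, LinearMap.smul_apply]
  kbsmul_right c b := map_smul _ c
  bsmul_mem hb hv := apply_mem_of_mem_tensorGrading _ (fun hx hq hm => by
    rw [tensorBAction_tmul hb hx]
    exact Submodule.smul_mem _ _
      (tmul_mem_tensorGrading hx (MQ.smul_mem hb hq) (by rw [← hm, add_left_comm]))) hv
  bleibniz v hb := congr($(tensorDiff_comp_tensorBAction 𝒩 MQ hb) v)
  ab_compat v ha hb := congr($(rTensor_lsmul_comp_tensorBAction 𝒩 MQ ha hb) v)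

@[simp]
theorem tensorDGModule_d : (tensorDGModule 𝒩 MQ).d = tensorDiff 𝒩 MQ := rfl

@[simp]
theorem tensorDGModule_bsmul (b : B) (v : N ⊗[k] Q) :
    (tensorDGModule 𝒩 MQ).bsmul b v = tensorBAction 𝒩 MQ b v := rfl

theorem tensorDGModule_isAcyclic (hac : 𝒩.IsAcyclic) :
    (tensorDGModule 𝒩 MQ).toDGMod.IsAcyclic := by
  obtain ⟨h, h_mem, hd⟩ := 𝒩.exists_contractingHomotopy hac
  have hH : tensorDiff 𝒩 MQ ∘ₗ h.rTensor Q + h.rTensor Q ∘ₗ tensorDiff 𝒩 MQ = LinearMap.id :=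
    TensorProduct.ext_of_mem 𝒩.gr MQ.gr fun {j _ x q} hx _ => by
      simp only [LinearMap.add_apply, LinearMap.comp_apply, LinearMap.rTensor_tmul,
        tensorDiff_tmul (h_mem hx), tensorDiff_tmul hx, map_add, map_smul, neg_one_zpow_sub_one,
        neg_smul, LinearMap.id_apply]
      rw [add_add_add_comm, ← add_tmul, show 𝒩.d (h x) + h (𝒩.d x) = x from congr($hd x),
        neg_add_cancel, add_zero]
  intro v hv
  rw [tensorDGModule_d] at hv
  exact ⟨h.rTensor Q v, by simpa [hv] using congr($hH v)⟩

end TensorDGModule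

def DGBiActMod.lbsmul {𝒜 : ConnCDGA k A} {ℬ : ConnCDGA k B} {M : Type w} [AddCommGroup M]
    [Module k M] (ℳ : DGBiActMod 𝒜 ℬ M) : B →ₗ[k] M →ₗ[k] M :=
  LinearMap.mk₂ k ℳ.bsmul ℳ.add_bsmul ℳ.kbsmul_left ℳ.bsmul_add ℳ.kbsmul_right

section Adjunction

open TensorProduct

variable {𝒜 : ConnCDGA k A} {ℬ : ConnCDGA k B} {N Q E : Type w} [AddCommGroup N] [Module k N]
  [AddCommGroup Q] [Module k Q] [AddCommGroup E] [Module k E]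
  {𝒩 : DGMod 𝒜 N} {MQ : DGMod ℬ Q} {ME : DGBiActMod 𝒜 ℬ E} {i : ℤ}

namespace HomHomDeg

variable (f : HomHomDeg 𝒩 MQ ME i)

def toLinearMap₂ : N →ₗ[k] Q →ₗ[k] E :=
  LinearMap.mk₂ k f.toFun f.map_add₁ f.map_ksmul₁ f.map_add₂ f.map_ksmul₂

@[simp]
theorem toLinearMap₂_apply (x : N) (q : Q) : f.toLinearMap₂ x q = f.toFun x q := rfl

theorem lift_comp_rTensor_lsmul {m : ℤ} {a : A} (ha : a ∈ 𝒜.gr m) :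
    lift f.toLinearMap₂ ∘ₗ (𝒩.lsmul a).rTensor Q
      = (-1 : k) ^ (i * m) • (ME.lsmul a ∘ₗ lift f.toLinearMap₂) :=
  TensorProduct.ext' fun x q => by simp [f.map_asmul x q ha]

theorem lift_comp_tensorBAction {m : ℤ} {b : B} (hb : b ∈ ℬ.gr m) :
    lift f.toLinearMap₂ ∘ₗ tensorBAction 𝒩 MQ b
      = (-1 : k) ^ (i * m) • (ME.lbsmul b ∘ₗ lift f.toLinearMap₂) :=
  TensorProduct.ext_of_mem 𝒩.gr MQ.gr fun {j _ x q} hx _ => by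
    simp only [LinearMap.comp_apply, LinearMap.smul_apply, tensorBAction_tmul hb hx, map_smul,
      lift.tmul, toLinearMap₂_apply, f.map_bsmul q hx hb, smul_smul, ← neg_one_zpow_add]
    rw [neg_one_zpow_eq_of_even_sub (n := i * m) ⟨m * j, by ring⟩]
    rfl

theorem d_comp_lift
    (hf : ∀ (j : ℤ) (x : N), x ∈ 𝒩.gr j → ∀ q : Q,
      ME.d (f.toFun x q) - ((-1 : k) ^ (i + j)) • f.toFun x (MQ.d q)
        - ((-1 : k) ^ i) • f.toFun (𝒩.d x) q = 0) :
    ME.d ∘ₗ lift f.toLinearMap₂ = (-1 : k) ^ i • (lift f.toLinearMap₂ ∘ₗ tensorDiff 𝒩 MQ) :=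
  TensorProduct.ext_of_mem 𝒩.gr MQ.gr fun {j _ x q} hx _ => by
    simp only [LinearMap.comp_apply, LinearMap.smul_apply, tensorDiff_tmul hx, map_add,
      map_smul, lift.tmul, toLinearMap₂_apply, smul_add, smul_smul, ← neg_one_zpow_add]
    rw [← sub_eq_zero, ← hf j x hx q]
    abel

noncomputable def uncurry : ABHomDeg (tensorDGModule 𝒩 MQ) ME i where
  toFun := lift f.toLinearMap₂
  map_add := map_add _
  map_ksmul := map_smul _
  map_gr hv := apply_mem_of_mem_tensorGrading _ (fun hx hq hm => by
    simpa [← hm, add_comm, add_left_comm] using f.map_gr hx hq) hv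
  map_smul v ha := congr($(f.lift_comp_rTensor_lsmul ha) v)
  map_bsmul v hb := congr($(f.lift_comp_tensorBAction hb) v)

end HomHomDeg

namespace ABHomDeg

variable (g : ABHomDeg (tensorDGModule 𝒩 MQ) ME i)

def curry : HomHomDeg 𝒩 MQ ME i where
  toFun x q := g.toFun (x ⊗ₜ q)
  map_add₁ x y q := by rw [add_tmul]; exact g.map_add _ _
  map_ksmul₁ c x q := by rw [← smul_tmul']; exact g.map_ksmul c _
  map_add₂ x q r := by rw [tmul_add]; exact g.map_add _ _
  map_ksmul₂ c x q := by rw [tmul_smul]; exact g.map_ksmul c _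
  map_gr hx hq := by
    simpa [add_comm, add_left_comm] using g.map_gr (tmul_mem_tensorGrading hx hq rfl)
  map_bsmul {j m x b} q hx hb := by
    have hxq : x ⊗ₜ MQ.smul b q = (-1 : k) ^ (m * j) • tensorBAction 𝒩 MQ b (x ⊗ₜ q) := by
      rw [tensorBAction_tmul hb hx, smul_smul, ← neg_one_zpow_add,
        Even.neg_one_zpow ⟨_, rfl⟩, one_smul]
    rw [hxq, g.map_ksmul, ← tensorDGModule_bsmul, g.map_bsmul _ hb, smul_smul,
      ← neg_one_zpow_add, show m * j + i * m = (i + j) * m by ring]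
  map_asmul x q ha := g.map_smul (x ⊗ₜ q) ha

end ABHomDeg

theorem HomHomDeg.eq_coboundary_curry_of_uncurry {n : ℤ} (f : HomHomDeg 𝒩 MQ ME i)
    (g : ABHomDeg (tensorDGModule 𝒩 MQ) ME n)
    (hg : ∀ v, f.uncurry.toFun v
      = ME.d (g.toFun v) - (-1 : k) ^ n • g.toFun ((tensorDGModule 𝒩 MQ).d v))
    {j : ℤ} {x : N} (hx : x ∈ 𝒩.gr j) (q : Q) :
    f.toFun x q = ME.d (g.curry.toFun x q) - (-1 : k) ^ (n + j) • g.curry.toFun x (MQ.d q)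
      - (-1 : k) ^ n • g.curry.toFun (𝒩.d x) q := by
  have hfg := hg (x ⊗ₜ q)
  rw [tensorDGModule_d, tensorDiff_tmul hx, g.map_add, g.map_ksmul] at hfg
  rw [show f.toFun x q = f.uncurry.toFun (x ⊗ₜ q) from rfl, hfg, smul_add, smul_smul,
    ← neg_one_zpow_add]
  simp only [ABHomDeg.curry]
  abel

end Adjunction

/-- Let `A`, `B` be connected cochain DG algebras over `k` and let `E`
be a DG `A⊗B`-module such that `Hom_{A⊗B}(M, E)` is acyclic for every acyclic DG
`A⊗B`-module `M` (i.e. `E` is semi-injective over `A⊗B`). Then for any left DG `B`-module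
`Q`, the left DG `A`-module `Hom_B(Q, E)` satisfies: `Hom_A(N, Hom_B(Q, E))` is acyclic
for every acyclic left DG `A`-module `N` (i.e. `Hom_B(Q, E)` is semi-injective over `A`). -/
theorem hom_of_semiinjective_is_semiinjective
    {k : Type u} [Field k] {A : Type v} [Ring A] [Algebra k A]
    {B : Type v} [Ring B] [Algebra k B]
    (𝒜 : ConnCDGA k A) (ℬ : ConnCDGA k B) {E : Type w} [AddCommGroup E] [Module k E]
    (ME : DGBiActMod 𝒜 ℬ E)
    (hE : ∀ (M : Type w) [AddCommGroup M] [Module k M] (ℳ : DGBiActMod 𝒜 ℬ M),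
      (∀ m : M, ℳ.d m = 0 → ∃ x : M, ℳ.d x = m) → ABHomAcyclic ℳ ME) :
    ∀ (Q : Type w) [AddCommGroup Q] [Module k Q] (MQ : DGMod ℬ Q),
    ∀ (N : Type w) [AddCommGroup N] [Module k N] (𝒩 : DGMod 𝒜 N),
      𝒩.IsAcyclic →
      ∀ (i : ℤ) (f : HomHomDeg 𝒩 MQ ME i),
        (∀ (j : ℤ) (x : N), x ∈ 𝒩.gr j → ∀ q : Q,
          ME.d (f.toFun x q) - ((-1 : k) ^ (i + j)) • f.toFun x (MQ.d q)
            - ((-1 : k) ^ i) • f.toFun (𝒩.d x) q = 0) →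
        ∃ g : HomHomDeg 𝒩 MQ ME (i - 1),
          ∀ (j : ℤ) (x : N), x ∈ 𝒩.gr j → ∀ q : Q,
            f.toFun x q = ME.d (g.toFun x q)
              - ((-1 : k) ^ (i - 1 + j)) • g.toFun x (MQ.d q)
              - ((-1 : k) ^ (i - 1)) • g.toFun (𝒩.d x) q := by
  intro Q _ _ MQ N _ _ 𝒩 hac i f hf
  obtain ⟨g, hg⟩ := hE (N ⊗[k] Q) (tensorDGModule 𝒩 MQ) (tensorDGModule_isAcyclic 𝒩 MQ hac) i
    f.uncurry fun v => congr($(f.d_comp_lift hf) v)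
  exact ⟨g.curry, fun j x hx q => f.eq_coboundary_curry_of_uncurry g hg hx q⟩
end

section
/- Let A be a connected cochain DG algebra over a field k and let M be a left DG A-module with dim_k H(M) = 1, say H^d(M) ≠ 0 for the (unique) integer d. Then there exists a DG A-submodule T of M such that the inclusion T ↪ M is a quasi-isomorphism and such that there is a surjective morphism of DG A-modules T → k_d which is a quasi-isomorphism, where k_d denotes the trivial DG A-module k concentrated in degree d (with A^{≥1} acting as zero, A^0 = k acting by multiplication, and zero differential). In particular, M is isomorphic to a shift of the trivial module k in the derived category of DG A-modules. -/
/-!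
Common infrastructure: connected cochain DG algebras over a field `k`,
(left/right/bi-) DG modules, Hom-complexes, torsion functors, etc.
-/

universe u v w

open DirectSum TensorProduct

variable {k : Type u} [Field k] {A : Type v} [Ring A] [Algebra k A]
variable {B : Type v} [Ring B] [Algebra k B]

/-!
Choose a complement `C` of the cocycles in `M^{n₀}`, so that `∂` maps `C` isomorphically onto the
boundaries of degree `n₀ + 1`, and take `T = k·z ⊕ C ⊕ M^{>n₀}`. Since `A` is connected,
`A⁰ = k` preserves `k·z ⊕ C` and `A^{≥1}` maps `T` into `M^{>n₀}`, so `T` is a DG submodule.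
Its cohomology is that of `M`: above degree `n₀ + 1` nothing has changed, `∂(C)` still exhausts
the boundaries of degree `n₀ + 1`, and the only cocycles in `T^{n₀}` are `k·z`. Any functional
that is `1` on `z`, applied to degree-`n₀` components, is then a surjective quasi-isomorphism
`T → k_{n₀}`: it kills `∂T` because `T^{n₀-1} = 0`, and `A^{≥1}T` because that lies in `M^{>n₀}`.
-/

theorem Submodule.exists_le_disjoint_ker_map_eq {K V W : Type*} [DivisionRing K]
    [AddCommGroup V] [Module K V] [AddCommGroup W] [Module K W]
    (P : Submodule K V) (f : V →ₗ[K] W) :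
    ∃ C ≤ P, Disjoint C (LinearMap.ker f) ∧ C.map f = P.map f := by
  obtain ⟨q, hq⟩ := (LinearMap.ker f ⊓ P).exists_isCompl
  refine ⟨q ⊓ P, inf_le_right, ?_, le_antisymm (Submodule.map_mono inf_le_right) ?_⟩
  · rw [disjoint_iff, ← hq.symm.inf_eq_bot]
    ac_rfl
  · calc P.map f = ((LinearMap.ker f ⊓ P) ⊔ q ⊓ P).map f := by
          rw [← sup_inf_assoc_of_le q inf_le_right, hq.sup_eq_top, top_inf_eq]
      _ ≤ (q ⊓ P).map f := by
          rw [Submodule.map_sup]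
          refine sup_le ((Submodule.map_le_iff_le_comap.mpr ?_).trans bot_le) le_rfl
          exact inf_le_left.trans f.ker_le_comap

namespace ConnCDGA

variable (𝒜 : ConnCDGA k A)

protected theorem induction_on {motive : A → Prop} (zero : motive 0)
    (homogeneous : ∀ (j : ℤ), ∀ a ∈ 𝒜.gr j, motive a)
    (add : ∀ a b, motive a → motive b → motive (a + b)) (a : A) : motive a :=
  letI := 𝒜.decomp
  DirectSum.Decomposition.inductionOn 𝒜.gr zero (fun a => homogeneous _ a a.2) add a

variable {𝒜}

theorem eq_zero_of_mem_gr_of_neg {j : ℤ} {a : A} (ha : a ∈ 𝒜.gr j) (hj : j < 0) : a = 0 := by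
  rwa [𝒜.connected j hj, Submodule.mem_bot] at ha

theorem exists_smul_one_eq_of_mem_gr_zero {a : A} (ha : a ∈ 𝒜.gr 0) :
    ∃ c : k, c • (1 : A) = a := by
  rwa [𝒜.deg_zero, Submodule.mem_span_singleton] at ha

end ConnCDGA

namespace DGMod

variable {𝒜 : ConnCDGA k A} {M : Type w} [AddCommGroup M] [Module k M] (ℳ : DGMod 𝒜 M)

protected theorem smul_zero (a : A) : ℳ.smul a 0 = 0 := by
  simpa using ℳ.ksmul_right 0 a 0

protected theorem zero_smul (m : M) : ℳ.smul 0 m = 0 := by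
  simpa using ℳ.ksmul_left 0 0 m

protected theorem induction_on {motive : M → Prop} (zero : motive 0)
    (homogeneous : ∀ (i : ℤ), ∀ m ∈ ℳ.gr i, motive m)
    (add : ∀ m m', motive m → motive m' → motive (m + m')) (m : M) : motive m :=
  letI := ℳ.decomp
  DirectSum.Decomposition.inductionOn ℳ.gr zero (fun m => homogeneous _ m m.2) add m

noncomputable def proj (i : ℤ) : M →ₗ[k] M :=
  letI := ℳ.decomp
  (ℳ.gr i).subtype ∘ₗ DirectSum.component k ℤ (fun j => ℳ.gr j) i ∘ₗ
    (DirectSum.decomposeLinearEquiv ℳ.gr).toLinearMap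

variable {ℳ}

theorem proj_mem (i : ℤ) (m : M) : ℳ.proj i m ∈ ℳ.gr i :=
  ((ℳ.decomp.decompose' m) i).2

theorem proj_eq_self_of_mem {i : ℤ} {m : M} (hm : m ∈ ℳ.gr i) : ℳ.proj i m = m :=
  letI := ℳ.decomp
  DirectSum.decompose_of_mem_same ℳ.gr hm

theorem proj_eq_zero_of_mem_of_ne {i j : ℤ} {m : M} (hm : m ∈ ℳ.gr j) (hij : i ≠ j) :
    ℳ.proj i m = 0 :=
  letI := ℳ.decomp
  DirectSum.decompose_of_mem_ne ℳ.gr hm hij.symm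

theorem proj_d (i : ℤ) (m : M) : ℳ.proj i (ℳ.d m) = ℳ.d (ℳ.proj (i - 1) m) := by
  induction m using ℳ.induction_on with
  | zero => simp only [map_zero]
  | add m m' hm hm' => simp only [map_add, hm, hm']
  | homogeneous j m hmj =>
    by_cases hij : i = j + 1
    · rw [proj_eq_self_of_mem (hij ▸ ℳ.d_mem hmj),
        proj_eq_self_of_mem (by rwa [hij, add_sub_cancel_right])]
    · rw [proj_eq_zero_of_mem_of_ne (ℳ.d_mem hmj) hij,
        proj_eq_zero_of_mem_of_ne hmj (by omega), map_zero]

theorem proj_smul {j : ℤ} {a : A} (ha : a ∈ 𝒜.gr j) (i : ℤ) (m : M) :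
    ℳ.proj i (ℳ.smul a m) = ℳ.smul a (ℳ.proj (i - j) m) := by
  induction m using ℳ.induction_on with
  | zero => simp only [map_zero, ℳ.smul_zero]
  | add m m' hm hm' => simp only [map_add, ℳ.smul_add, hm, hm']
  | homogeneous l m hml =>
    by_cases hil : i = j + l
    · rw [proj_eq_self_of_mem (hil ▸ ℳ.smul_mem ha hml),
        proj_eq_self_of_mem (by rwa [hil, add_sub_cancel_left])]
    · rw [proj_eq_zero_of_mem_of_ne (ℳ.smul_mem ha hml) hil,
        proj_eq_zero_of_mem_of_ne hml (by omega), ℳ.smul_zero]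

theorem exists_mem_gr_d_eq {i : ℤ} {m w : M} (hm : m ∈ ℳ.gr i) (hw : ℳ.d w = m) :
    ∃ w' ∈ ℳ.gr (i - 1), ℳ.d w' = m :=
  ⟨ℳ.proj (i - 1) w, proj_mem _ _, by rw [← proj_d, hw, proj_eq_self_of_mem hm]⟩

variable (ℳ)

/-- The graded subspace of `M` that vanishes below degree `n₀`, equals `M` above `n₀`, and has
degree-`n₀` part `V ∩ M^{n₀}`. -/
noncomputable def truncation (n₀ : ℤ) (V : Submodule k M) : Submodule k M :=
  V.comap (ℳ.proj n₀) ⊓ ⨅ (i : ℤ) (_ : i < n₀), LinearMap.ker (ℳ.proj i)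

variable {ℳ} {n₀ : ℤ} {V : Submodule k M}

theorem mem_truncation {t : M} :
    t ∈ ℳ.truncation n₀ V ↔ ℳ.proj n₀ t ∈ V ∧ ∀ i < n₀, ℳ.proj i t = 0 := by
  simp [truncation]

theorem proj_eq_zero_of_mem_truncation {t : M} (ht : t ∈ ℳ.truncation n₀ V) {i : ℤ}
    (hi : i < n₀) : ℳ.proj i t = 0 :=
  (mem_truncation.mp ht).2 i hi

theorem eq_zero_of_mem_truncation_of_mem_gr {t : M} (ht : t ∈ ℳ.truncation n₀ V) {i : ℤ}
    (hti : t ∈ ℳ.gr i) (hi : i < n₀) : t = 0 := by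
  rw [← proj_eq_self_of_mem hti]
  exact proj_eq_zero_of_mem_truncation ht hi

theorem mem_truncation_of_mem_gr {m : M} {i : ℤ} (hm : m ∈ ℳ.gr i) (hi : n₀ < i) :
    m ∈ ℳ.truncation n₀ V := by
  refine mem_truncation.mpr ⟨?_, fun l hl => proj_eq_zero_of_mem_of_ne hm (by omega)⟩
  rw [proj_eq_zero_of_mem_of_ne hm (by omega)]
  exact V.zero_mem

theorem mem_truncation_of_mem_gr_self {m : M} (hm : m ∈ ℳ.gr n₀) (hmV : m ∈ V) :
    m ∈ ℳ.truncation n₀ V := by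
  refine mem_truncation.mpr ⟨?_, fun l hl => proj_eq_zero_of_mem_of_ne hm (by omega)⟩
  rwa [proj_eq_self_of_mem hm]

theorem proj_d_eq_zero_of_mem_truncation {t : M} (ht : t ∈ ℳ.truncation n₀ V) {i : ℤ}
    (hi : i ≤ n₀) : ℳ.proj i (ℳ.d t) = 0 := by
  rw [proj_d, proj_eq_zero_of_mem_truncation ht (by omega), map_zero]

theorem proj_smul_eq_zero_of_mem_truncation {j : ℤ} {a : A} (ha : a ∈ 𝒜.gr j) (hj : 1 ≤ j)
    {t : M} (ht : t ∈ ℳ.truncation n₀ V) {i : ℤ} (hi : i ≤ n₀) :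
    ℳ.proj i (ℳ.smul a t) = 0 := by
  rw [proj_smul ha, proj_eq_zero_of_mem_truncation ht (by omega), ℳ.smul_zero]

theorem d_mem_truncation {t : M} (ht : t ∈ ℳ.truncation n₀ V) :
    ℳ.d t ∈ ℳ.truncation n₀ V := by
  refine mem_truncation.mpr ⟨?_, fun i hi => proj_d_eq_zero_of_mem_truncation ht hi.le⟩
  rw [proj_d_eq_zero_of_mem_truncation ht le_rfl]
  exact V.zero_mem

theorem proj_mem_truncation {t : M} (ht : t ∈ ℳ.truncation n₀ V) (i : ℤ) :
    ℳ.proj i t ∈ ℳ.truncation n₀ V := by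
  refine mem_truncation.mpr ⟨?_, fun l hl => ?_⟩
  · by_cases hi : n₀ = i
    · rw [hi, proj_eq_self_of_mem (proj_mem i t), ← hi]
      exact (mem_truncation.mp ht).1
    · rw [proj_eq_zero_of_mem_of_ne (proj_mem i t) hi]
      exact V.zero_mem
  · by_cases hli : l = i
    · rw [hli, proj_eq_self_of_mem (proj_mem i t), ← hli]
      exact proj_eq_zero_of_mem_truncation ht hl
    · exact proj_eq_zero_of_mem_of_ne (proj_mem i t) hli

theorem smul_mem_truncation (a : A) {t : M} (ht : t ∈ ℳ.truncation n₀ V) :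
    ℳ.smul a t ∈ ℳ.truncation n₀ V := by
  induction a using 𝒜.induction_on with
  | zero => rw [ℳ.zero_smul]; exact zero_mem _
  | add a b ha hb => rw [ℳ.add_smul]; exact add_mem ha hb
  | homogeneous j a ha =>
    rcases lt_trichotomy j 0 with hj | rfl | hj
    · rw [ConnCDGA.eq_zero_of_mem_gr_of_neg ha hj, ℳ.zero_smul]
      exact zero_mem _
    · obtain ⟨c, rfl⟩ := ConnCDGA.exists_smul_one_eq_of_mem_gr_zero ha
      rw [ℳ.ksmul_left, ℳ.one_smul]
      exact Submodule.smul_mem _ c ht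
    · refine mem_truncation.mpr ⟨?_, fun i hi =>
        proj_smul_eq_zero_of_mem_truncation ha hj ht hi.le⟩
      rw [proj_smul_eq_zero_of_mem_truncation ha hj ht le_rfl]
      exact V.zero_mem

theorem exists_mem_truncation_d_eq (hV : (ℳ.gr n₀).map ℳ.d ≤ (V ⊓ ℳ.gr n₀).map ℳ.d)
    {i : ℤ} (hi : n₀ < i) {w : M} (hw : w ∈ ℳ.gr (i - 1)) :
    ∃ w' ∈ ℳ.truncation n₀ V, w' ∈ ℳ.gr (i - 1) ∧ ℳ.d w' = ℳ.d w := by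
  rcases (show n₀ ≤ i - 1 by omega).eq_or_lt with hi' | hi'
  · rw [← hi'] at hw ⊢
    obtain ⟨v, ⟨hvV, hv⟩, hvw⟩ := hV (Submodule.mem_map_of_mem hw)
    exact ⟨v, mem_truncation_of_mem_gr_self hv hvV, hv, hvw⟩
  · exact ⟨w, mem_truncation_of_mem_gr hw hi', hw, rfl⟩

theorem exists_d_eq_of_mem_truncation (hV : (ℳ.gr n₀).map ℳ.d ≤ (V ⊓ ℳ.gr n₀).map ℳ.d)
    {i : ℤ} (hi : i ≠ n₀) (hM : ∀ m ∈ ℳ.gr i, ℳ.d m = 0 → ∃ w ∈ ℳ.gr (i - 1), ℳ.d w = m)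
    {t : M} (ht : t ∈ ℳ.truncation n₀ V) (hti : t ∈ ℳ.gr i) (hdt : ℳ.d t = 0) :
    ∃ w ∈ ℳ.truncation n₀ V, w ∈ ℳ.gr (i - 1) ∧ ℳ.d w = t := by
  rcases hi.lt_or_gt with hlt | hgt
  · refine ⟨0, zero_mem _, zero_mem _, ?_⟩
    rw [map_zero, eq_zero_of_mem_truncation_of_mem_gr ht hti hlt]
  · obtain ⟨w, hw, rfl⟩ := hM t hti hdt
    exact exists_mem_truncation_d_eq hV hgt hw

theorem exists_smul_eq_of_mem_truncation {z : M} {C : Submodule k M} (hzc : ℳ.d z = 0)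
    (hC : Disjoint C (LinearMap.ker ℳ.d)) {t : M}
    (ht : t ∈ ℳ.truncation n₀ (Submodule.span k {z} ⊔ C)) (htn : t ∈ ℳ.gr n₀)
    (hdt : ℳ.d t = 0) : ∃ c : k, c • z = t := by
  have htV := (mem_truncation.mp ht).1
  rw [proj_eq_self_of_mem htn] at htV
  obtain ⟨y, hy, w, hw, rfl⟩ := Submodule.mem_sup.mp htV
  obtain ⟨c, rfl⟩ := Submodule.mem_span_singleton.mp hy
  have hdw : ℳ.d w = 0 := by rwa [map_add, map_smul, hzc, smul_zero, zero_add] at hdt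
  rw [Submodule.disjoint_def.mp hC w hw hdw, add_zero]
  exact ⟨c, rfl⟩

theorem eq_zero_of_mem_truncation_of_d_eq {z : M} {C : Submodule k M} (hzc : ℳ.d z = 0)
    (hC : Disjoint C (LinearMap.ker ℳ.d)) (hz : ∀ w, ℳ.d w ≠ z) {t : M}
    (ht : t ∈ ℳ.truncation n₀ (Submodule.span k {z} ⊔ C)) (htn : t ∈ ℳ.gr n₀) {w : M}
    (hwt : ℳ.d w = t) : t = 0 := by
  obtain ⟨c, rfl⟩ := exists_smul_eq_of_mem_truncation hzc hC ht htn (by rw [← hwt, ℳ.d_sq])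
  rcases eq_or_ne c 0 with rfl | hc
  · exact zero_smul k z
  · refine absurd ?_ (hz (c⁻¹ • w))
    rw [map_smul, hwt, smul_smul, inv_mul_cancel₀ hc, _root_.one_smul]

end DGMod

/-- Let `M` be a left DG `A`-module with `dim_k H(M) = 1`, concentrated
in cohomological degree `n₀` (witnessed by a cocycle `z` of degree `n₀` which is not a
boundary, such that every homogeneous cocycle is, modulo boundaries, a scalar multiple of
`z` in degree `n₀` and zero otherwise). Then there is a DG `A`-submodule `T ⊆ M` (a graded
`k`-subspace closed under the `A`-action, the differential and homogeneous components)
such that the inclusion `T ↪ M` is a quasi-isomorphism and there is a surjective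
quasi-isomorphism of DG `A`-modules `π : T → k_{n₀}` onto the trivial DG module `k`
concentrated in degree `n₀`. -/
theorem one_dimensional_cohomology_quasi_iso_to_shifted_trivial
    {k : Type u} [Field k] {A : Type v} [Ring A] [Algebra k A]
    (𝒜 : ConnCDGA k A) {M : Type w} [AddCommGroup M] [Module k M]
    (ℳ : DGMod 𝒜 M) (n₀ : ℤ) (z : M)
    (hz : z ∈ ℳ.gr n₀) (hzc : ℳ.d z = 0)
    (hznb : ¬ ∃ w ∈ ℳ.gr (n₀ - 1), ℳ.d w = z)
    (hdim : ∀ (i : ℤ) (m : M), m ∈ ℳ.gr i → ℳ.d m = 0 →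
      ∃ c : k, ∃ w ∈ ℳ.gr (i - 1), m = c • (if i = n₀ then z else 0) + ℳ.d w) :
    ∃ T : Submodule k M,
      -- `T` is a DG `A`-submodule of `M`
      (∀ (a : A) (t : M), t ∈ T → ℳ.smul a t ∈ T) ∧
      (∀ t ∈ T, ℳ.d t ∈ T) ∧
      (∀ t ∈ T, ∀ i : ℤ, ((ℳ.decomp.decompose' t) i : M) ∈ T) ∧
      -- the inclusion `T ↪ M` is a quasi-isomorphism:
      -- surjective on cohomology
      (∀ (i : ℤ) (m : M), m ∈ ℳ.gr i → ℳ.d m = 0 →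
        ∃ t ∈ T, t ∈ ℳ.gr i ∧ ℳ.d t = 0 ∧ ∃ w : M, m - t = ℳ.d w) ∧
      -- injective on cohomology
      (∀ (i : ℤ) (t : M), t ∈ T → t ∈ ℳ.gr i → ℳ.d t = 0 →
        (∃ w : M, ℳ.d w = t) → ∃ w ∈ T, ℳ.d w = t) ∧
      -- a surjective quasi-isomorphism of DG `A`-modules `π : T → k_{n₀}`
      ∃ π : M → k,
        (∀ s t : M, s ∈ T → t ∈ T → π (s + t) = π s + π t) ∧
        (∀ (c : k) (t : M), t ∈ T → π (c • t) = c * π t) ∧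
        -- degree 0 : `π` kills homogeneous elements of degree `≠ n₀`
        (∀ (i : ℤ) (t : M), t ∈ T → t ∈ ℳ.gr i → i ≠ n₀ → π t = 0) ∧
        -- `A`-linearity into the trivial module (`A^{≥1}` acts as zero on `k_{n₀}`)
        (∀ (j : ℤ) (a : A), 1 ≤ j → a ∈ 𝒜.gr j → ∀ t ∈ T, π (ℳ.smul a t) = 0) ∧
        -- chain map into the module with zero differential
        (∀ t ∈ T, π (ℳ.d t) = 0) ∧
        -- surjectivity and quasi-isomorphism onto `k_{n₀}`
        (∃ t ∈ T, t ∈ ℳ.gr n₀ ∧ ℳ.d t = 0 ∧ π t = 1) ∧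
        (∀ (i : ℤ), i ≠ n₀ → ∀ t ∈ T, t ∈ ℳ.gr i → ℳ.d t = 0 →
          ∃ w ∈ T, w ∈ ℳ.gr (i - 1) ∧ ℳ.d w = t) ∧
        (∀ t ∈ T, t ∈ ℳ.gr n₀ → ℳ.d t = 0 → π t = 0 → ∃ w ∈ T, ℳ.d w = t) := by
  obtain ⟨C, hCn₀, hCZ, hCB⟩ := (ℳ.gr n₀).exists_le_disjoint_ker_map_eq ℳ.d
  have hz_ne_d : ∀ w, ℳ.d w ≠ z := fun w hw => hznb (DGMod.exists_mem_gr_d_eq hz hw)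
  have hz0 : z ≠ 0 := fun h => hz_ne_d 0 (by rw [map_zero, h])
  obtain ⟨f, hfz⟩ := Module.Projective.exists_dual_eq_one k hz0
  set T := ℳ.truncation n₀ (Submodule.span k {z} ⊔ C)
  have hzT : z ∈ T := DGMod.mem_truncation_of_mem_gr_self hz
    (Submodule.mem_sup_left (Submodule.mem_span_singleton_self z))
  have hexact : ∀ i ≠ n₀, ∀ t ∈ T, t ∈ ℳ.gr i → ℳ.d t = 0 →
      ∃ w ∈ T, w ∈ ℳ.gr (i - 1) ∧ ℳ.d w = t := by
    refine fun i hi t ht => DGMod.exists_d_eq_of_mem_truncation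
      (hCB ▸ Submodule.map_mono (le_inf le_sup_right hCn₀)) hi (fun m hm hdm => ?_) ht
    obtain ⟨c, w, hw, hmw⟩ := hdim i m hm hdm
    exact ⟨w, hw, by simp [hmw, hi]⟩
  refine ⟨T, fun a t => DGMod.smul_mem_truncation a, fun t => DGMod.d_mem_truncation,
    fun t ht i => DGMod.proj_mem_truncation ht i, ?_, ?_, fun x => f (ℳ.proj n₀ x),
    fun s t _ _ => by simp only [map_add], fun c t _ => by simp only [map_smul, smul_eq_mul],
    fun i t _ hti hi => by
      dsimp only; rw [DGMod.proj_eq_zero_of_mem_of_ne hti hi.symm, map_zero],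
    fun j a hj ha t ht => by
      dsimp only; rw [DGMod.proj_smul_eq_zero_of_mem_truncation ha hj ht le_rfl, map_zero],
    fun t ht => by dsimp only; rw [DGMod.proj_d_eq_zero_of_mem_truncation ht le_rfl, map_zero],
    ⟨z, hzT, hz, hzc, by dsimp only; rw [DGMod.proj_eq_self_of_mem hz, hfz]⟩, hexact, ?_⟩
  · intro i m hm hdm
    obtain ⟨c, w, -, hmw⟩ := hdim i m hm hdm
    rcases eq_or_ne i n₀ with rfl | hi
    · refine ⟨c • z, Submodule.smul_mem _ c hzT, Submodule.smul_mem _ c hz,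
        by rw [map_smul, hzc, smul_zero], w, ?_⟩
      rw [hmw, if_pos rfl, add_sub_cancel_left]
    · refine ⟨0, zero_mem _, zero_mem _, map_zero _, w, ?_⟩
      rw [hmw, if_neg hi, smul_zero, zero_add, sub_zero]
  · intro i t ht hti hdt ⟨w, hwt⟩
    rcases eq_or_ne i n₀ with rfl | hi
    · refine ⟨0, zero_mem _, ?_⟩
      rw [map_zero, DGMod.eq_zero_of_mem_truncation_of_d_eq hzc hCZ hz_ne_d ht hti hwt]
    · obtain ⟨w', hw'T, -, hw'⟩ := hexact i hi t ht hti hdt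
      exact ⟨w', hw'T, hw'⟩
  · intro t ht htn hdt hft
    obtain ⟨c, rfl⟩ := DGMod.exists_smul_eq_of_mem_truncation hzc hCZ ht htn hdt
    dsimp only at hft
    rw [DGMod.proj_eq_self_of_mem htn, map_smul, hfz, smul_eq_mul, mul_one] at hft
    exact ⟨0, zero_mem _, by rw [hft, zero_smul, map_zero]⟩
end

section
/- Let A be a connected cochain DG algebra over a field k and let N be a DG A-bimodule such that N is isomorphic to A as a left DG A-module and N is isomorphic to A as a right DG A-module. Then there exists a DG algebra automorphism φ of A such that N is isomorphic to A(φ) as a DG A-bimodule, where A(φ) equals A as a left DG A-module with right action x·a = x φ(a). -/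
/-!
Common infrastructure: connected cochain DG algebras over a field `k`,
(left/right/bi-) DG modules, Hom-complexes, torsion functors, etc.
-/

universe u v w

open DirectSum TensorProduct

variable {k : Type u} [Field k] {A : Type v} [Ring A] [Algebra k A]
variable {B : Type v} [Ring B] [Algebra k B]

/- Write `e = F 1` for the generator of `N` as a left module.  Moving `a` from the right of `e`
to the left, `e · a = φ(a) · e`, defines `φ`; it is an endomorphism of the DG algebra `A`
because `N` is a DG bimodule and `e` is a degree-zero cycle.  Writing `e = G c`, `φ` is
`F⁻¹ ∘ G` composed with left multiplication by `c`, and `c` is a unit because `A⁰ = k`. -/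

theorem ConnCDGA.d_one (𝒜 : ConnCDGA k A) : 𝒜.d 1 = 0 := by
  have h := 𝒜.leibniz 𝒜.one_mem 𝒜.one_mem
  rwa [one_mul, mul_one, one_mul, zpow_zero, one_smul, left_eq_add] at h

theorem ConnCDGA.isUnit_of_mem_gr_zero (𝒜 : ConnCDGA k A) {c : A} (hc : c ∈ 𝒜.gr 0)
    (hc0 : c ≠ 0) : IsUnit c := by
  rw [𝒜.deg_zero] at hc
  obtain ⟨t, rfl⟩ := Submodule.mem_span_singleton.mp hc
  have ht : t ≠ 0 := by
    rintro rfl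
    exact hc0 (zero_smul k 1)
  rw [← Algebra.algebraMap_eq_smul_one]
  exact (isUnit_iff_ne_zero.mpr ht).map (algebraMap k A)

theorem DGBimod.rsmul_zero_left {𝒜 : ConnCDGA k A} {N : Type w} [AddCommGroup N] [Module k N]
    (𝒩 : DGBimod 𝒜 N) (a : A) : 𝒩.rsmul 0 a = 0 :=
  (AddMonoidHom.mk' (𝒩.rsmul · a) (𝒩.rsmul_add a)).map_zero

structure IsLeftRegularIso {𝒜 : ConnCDGA k A} {N : Type w} [AddCommGroup N] [Module k N]
    (𝒩 : DGMod 𝒜 N) (F : A → N) : Prop where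
  bij : Function.Bijective F
  map_add : ∀ x y : A, F (x + y) = F x + F y
  map_ksmul : ∀ (c : k) (x : A), F (c • x) = c • F x
  mem_gr_iff : ∀ (i : ℤ) (x : A), x ∈ 𝒜.gr i ↔ F x ∈ 𝒩.gr i
  map_d : ∀ x : A, F (𝒜.d x) = 𝒩.d (F x)
  map_smul : ∀ a x : A, F (a * x) = 𝒩.smul a (F x)

theorem IsLeftRegularIso.map_zero {𝒜 : ConnCDGA k A} {N : Type w} [AddCommGroup N]
    [Module k N] {𝒩 : DGMod 𝒜 N} {F : A → N} (hF : IsLeftRegularIso 𝒩 F) : F 0 = 0 :=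
  (AddMonoidHom.mk' F hF.map_add).map_zero

namespace DGBimod

variable {𝒜 : ConnCDGA k A} {N : Type w} [AddCommGroup N] [Module k N] (𝒩 : DGBimod 𝒜 N)

noncomputable def twist {F : A → N} (hF : Function.Bijective F) (a : A) : A :=
  (Equiv.ofBijective F hF).symm (𝒩.rsmul (F 1) a)

theorem apply_twist {F : A → N} (hF : Function.Bijective F) (a : A) :
    F (𝒩.twist hF a) = 𝒩.rsmul (F 1) a :=
  (Equiv.ofBijective F hF).apply_symm_apply _

theorem bijective_twist {F G : A → N} (hF : Function.Bijective F) (hG : Function.Bijective G)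
    (hGrsmul : ∀ x a : A, G (x * a) = 𝒩.rsmul (G x) a) {c : A} (hc : IsUnit c)
    (hGc : G c = F 1) : Function.Bijective (𝒩.twist hF) := by
  have h : 𝒩.twist hF = (Equiv.ofBijective F hF).symm ∘ G ∘ (c * ·) := by
    funext a
    simp only [twist, Function.comp_apply, hGrsmul, hGc]
  rw [h]
  exact (Equiv.bijective _).comp (hG.comp (IsUnit.isUnit_iff_mulLeft_bijective.mp hc))

end DGBimod

namespace IsLeftRegularIso

variable {𝒜 : ConnCDGA k A} {N : Type w} [AddCommGroup N] [Module k N] {𝒩 : DGBimod 𝒜 N}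
  {F : A → N}

theorem map_mul_twist (hF : IsLeftRegularIso 𝒩.toDGMod F) (x a : A) :
    F (x * 𝒩.twist hF.bij a) = 𝒩.rsmul (F x) a := by
  rw [hF.map_smul, 𝒩.apply_twist hF.bij, ← 𝒩.smul_rsmul_assoc, ← hF.map_smul, mul_one]

theorem isDGAut_twist (hF : IsLeftRegularIso 𝒩.toDGMod F)
    (hbij : Function.Bijective (𝒩.twist hF.bij)) : IsDGAut 𝒜 (𝒩.twist hF.bij) := by
  have hF1 : F 1 ∈ 𝒩.gr 0 := (hF.mem_gr_iff 0 1).mp 𝒜.one_mem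
  have hφ := 𝒩.apply_twist hF.bij
  refine ⟨hbij, fun x y ↦ hF.bij.1 ?_, fun x y ↦ hF.bij.1 ?_, hF.bij.1 ?_, fun c x ↦ hF.bij.1 ?_,
    fun {i x} hx ↦ (hF.mem_gr_iff i _).mpr ?_, fun x ↦ hF.bij.1 ?_⟩
  · simp only [hF.map_add, hφ, 𝒩.add_rsmul]
  · rw [hF.map_mul_twist, hφ, hφ, 𝒩.mul_rsmul]
  · rw [hφ, 𝒩.one_rsmul]
  · simp only [hF.map_ksmul, hφ, 𝒩.krsmul_right]
  · simpa only [hφ, zero_add] using 𝒩.rsmul_mem hF1 hx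
  · have hdF1 : 𝒩.d (F 1) = 0 := by rw [← hF.map_d, 𝒜.d_one, hF.map_zero]
    have h := 𝒩.rleibniz x hF1
    rw [hdF1, 𝒩.rsmul_zero_left, zero_add, zpow_zero, one_smul] at h
    rw [hφ, hF.map_d, hφ, h]

end IsLeftRegularIso

theorem bimodule_free_both_sides_is_twist_general
    {k : Type u} [Field k] {A : Type v} [Ring A] [Algebra k A]
    (𝒜 : ConnCDGA k A) {N : Type w} [AddCommGroup N] [Module k N]
    (𝒩 : DGBimod 𝒜 N)
    (F : A → N) (hFbij : Function.Bijective F)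
    (hFadd : ∀ x y : A, F (x + y) = F x + F y)
    (hFk : ∀ (c : k) (x : A), F (c • x) = c • F x)
    (hFgr : ∀ (i : ℤ) (x : A), x ∈ 𝒜.gr i ↔ F x ∈ 𝒩.gr i)
    (hFd : ∀ x : A, F (𝒜.d x) = 𝒩.d (F x))
    (hFsmul : ∀ a x : A, F (a * x) = 𝒩.smul a (F x))
    (G : A → N) (hGbij : Function.Bijective G)
    (hGadd : ∀ x y : A, G (x + y) = G x + G y)
    (hGgr : ∀ (i : ℤ) (x : A), x ∈ 𝒜.gr i ↔ G x ∈ 𝒩.gr i)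
    (hGrsmul : ∀ x a : A, G (x * a) = 𝒩.rsmul (G x) a) :
    ∃ φ : A → A, IsDGAut 𝒜 φ ∧
      ∃ H : A → N, Function.Bijective H ∧
        (∀ x y : A, H (x + y) = H x + H y) ∧
        (∀ (c : k) (x : A), H (c • x) = c • H x) ∧
        (∀ (i : ℤ) (x : A), x ∈ 𝒜.gr i ↔ H x ∈ 𝒩.gr i) ∧
        (∀ x : A, H (𝒜.d x) = 𝒩.d (H x)) ∧
        (∀ a x : A, H (a * x) = 𝒩.smul a (H x)) ∧
        (∀ x a : A, H (x * φ a) = 𝒩.rsmul (H x) a) := by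
  have hF : IsLeftRegularIso 𝒩.toDGMod F := ⟨hFbij, hFadd, hFk, hFgr, hFd, hFsmul⟩
  obtain ⟨c, hGc⟩ := hGbij.2 (F 1)
  have hc : c ∈ 𝒜.gr 0 := (hGgr 0 c).mpr (hGc ▸ (hFgr 0 1).mp 𝒜.one_mem)
  have hcu : IsUnit c := by
    rcases eq_or_ne c 0 with rfl | hc0
    · have hG0 : G 0 = 0 := (AddMonoidHom.mk' G hGadd).map_zero
      have h10 : (1 : A) = 0 := hFbij.1 (by rw [← hGc, hG0, hF.map_zero])
      exact isUnit_zero_iff.mpr h10.symm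
    · exact 𝒜.isUnit_of_mem_gr_zero hc hc0
  exact ⟨𝒩.twist hFbij, hF.isDGAut_twist (𝒩.bijective_twist hFbij hGbij hGrsmul hcu hGc),
    F, hFbij, hFadd, hFk, hFgr, hFd, hFsmul, hF.map_mul_twist⟩

/-- Let `N` be a DG `A`-bimodule which is isomorphic to `A` as a left DG
`A`-module (via `F`) and isomorphic to `A` as a right DG `A`-module (via `G`). Then there
exists a DG algebra automorphism `φ` of `A` such that `N ≅ A(φ)` as DG `A`-bimodules,
where `A(φ)` is `A` as a left DG module with right action `x·a = x φ(a)`; i.e. there is a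
bijection `H : A → N` which is additive, `k`-linear, graded, a chain map, left `A`-linear,
and satisfies `H(x φ(a)) = H(x)·a`. -/
theorem bimodule_free_both_sides_is_twist
    {k : Type u} [Field k] {A : Type v} [Ring A] [Algebra k A]
    (𝒜 : ConnCDGA k A) {N : Type w} [AddCommGroup N] [Module k N]
    (𝒩 : DGBimod 𝒜 N)
    (F : A → N) (hFbij : Function.Bijective F)
    (hFadd : ∀ x y : A, F (x + y) = F x + F y)
    (hFk : ∀ (c : k) (x : A), F (c • x) = c • F x)
    (hFgr : ∀ (i : ℤ) (x : A), x ∈ 𝒜.gr i ↔ F x ∈ 𝒩.gr i)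
    (hFd : ∀ x : A, F (𝒜.d x) = 𝒩.d (F x))
    (hFsmul : ∀ a x : A, F (a * x) = 𝒩.smul a (F x))
    (G : A → N) (hGbij : Function.Bijective G)
    (hGadd : ∀ x y : A, G (x + y) = G x + G y)
    (hGk : ∀ (c : k) (x : A), G (c • x) = c • G x)
    (hGgr : ∀ (i : ℤ) (x : A), x ∈ 𝒜.gr i ↔ G x ∈ 𝒩.gr i)
    (hGd : ∀ x : A, G (𝒜.d x) = 𝒩.d (G x))
    (hGrsmul : ∀ x a : A, G (x * a) = 𝒩.rsmul (G x) a) :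
    ∃ φ : A → A, IsDGAut 𝒜 φ ∧
      ∃ H : A → N, Function.Bijective H ∧
        (∀ x y : A, H (x + y) = H x + H y) ∧
        (∀ (c : k) (x : A), H (c • x) = c • H x) ∧
        (∀ (i : ℤ) (x : A), x ∈ 𝒜.gr i ↔ H x ∈ 𝒩.gr i) ∧
        (∀ x : A, H (𝒜.d x) = 𝒩.d (H x)) ∧
        (∀ a x : A, H (a * x) = 𝒩.smul a (H x)) ∧
        (∀ x a : A, H (x * φ a) = 𝒩.rsmul (H x) a) :=
  bimodule_free_both_sides_is_twist_general 𝒜 𝒩 F hFbij hFadd hFk hFgr hFd hFsmul G hGbij hGadd hGgr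
    hGrsmul
end
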